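/- arXiv:1410.2661 — 7 statements merged into one kernel-verified Lean document; each statement's English description precedes it below -/
import Mathlib

section
/- Assume the positive sequence (γ_n) satisfies conditions (C1)–(C7). Then for every ω ∈ ℝ the limit lim_{n→∞} γ_n (p_n(ω)² + p_{n+1}(ω)²) exists; moreover, for every B > 0 there exist constants m_B and M_B with 0 < m_B < M_B < ∞ such that m_B ≤ lim_{n→∞} γ_n (p_n(ω)² + p_{n+1}(ω)²) ≤ M_B for all ω with |ω| ≤ B, and the convergence is uniform on the set {ω : |ω| ≤ B}. -/
open Filter

set_option maxHeartbeats 1000000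
set_option maxHeartbeats 1000000
namespace Stmt1Aux
noncomputable def KK (γ : ℕ → ℝ) (p : ℕ → ℝ → ℝ) (n : ℕ) (ω : ℝ) : ℝ :=
  γ n * (p n ω ^ 2 + p (n + 1) ω ^ 2) - ω * p n ω * p (n + 1) ω
noncomputable def cc (γ : ℕ → ℝ) (B : ℝ) (k : ℕ) : ℝ :=
  (32 + 480 * B) * (|γ (k + 1) - γ k| / γ k ^ 2)
    + 4608 * (|(γ (k + 2) - γ (k + 1)) - (γ (k + 1) - γ k)| / γ k)
lemma abs_mul_le_half (a b : ℝ) : |a * b| ≤ (a ^ 2 + b ^ 2) / 2 := by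
  rw [abs_mul]
  nlinarith [sq_nonneg (|a| - |b|), sq_abs a, sq_abs b, abs_nonneg a, abs_nonneg b]

lemma abs_triple (a b c x y : ℝ) :
    |a * x ^ 2 + b * y ^ 2 + c * (x * y)| ≤ |a| * x ^ 2 + |b| * y ^ 2 + |c| * |x * y| := by
  calc |a * x ^ 2 + b * y ^ 2 + c * (x * y)|
      ≤ |a * x ^ 2 + b * y ^ 2| + |c * (x * y)| := abs_add_le _ _
    _ ≤ |a * x ^ 2| + |b * y ^ 2| + |c * (x * y)| := by linarith [abs_add_le (a * x ^ 2) (b * y ^ 2)]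
    _ = |a| * x ^ 2 + |b| * y ^ 2 + |c| * |x * y| := by
        rw [abs_mul, abs_mul, abs_mul, abs_of_nonneg (sq_nonneg x), abs_of_nonneg (sq_nonneg y)]

lemma abs_comb (A P D g Q : ℝ) (hg : 0 ≤ g) :
    |A * P + D * g * Q| ≤ |A| * |P| + |D| * g * |Q| := by
  calc |A * P + D * g * Q| ≤ |A * P| + |D * g * Q| := abs_add_le _ _
    _ = |A| * |P| + |D| * g * |Q| := by rw [abs_mul, abs_mul, abs_mul, abs_of_nonneg hg]

lemma Xbound (B g0 g1 w x y : ℝ) (hg0 : 0 < g0) (hg1 : 0 < g1)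
    (hB1 : B ≤ g1) (h01 : g0 ≤ 2 * g1) (hw : |w| ≤ B) :
    |g1 * y ^ 2 + w * (x * y) - g0 * x ^ 2| ≤ 3 * (g1 * (x ^ 2 + y ^ 2)) := by
  have hmul : |w * (x * y)| ≤ g1 * ((x ^ 2 + y ^ 2) / 2) := by
    rw [abs_mul]
    have h1 := abs_mul_le_half x y
    have h2 : |w| ≤ g1 := le_trans hw hB1
    nlinarith [abs_nonneg w, abs_nonneg (x * y)]
  have h3 := abs_le.mp hmul
  have m1 : g0 * x ^ 2 ≤ 2 * g1 * x ^ 2 := by nlinarith [sq_nonneg x]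
  have m0 : 0 ≤ g0 * x ^ 2 := by positivity
  have m2 : 0 ≤ g1 * x ^ 2 := by positivity
  have m3 : 0 ≤ g1 * y ^ 2 := by positivity
  rw [abs_le]
  constructor <;> nlinarith [h3.1, h3.2]

lemma Pbound (B g0 g1 g2 w x y : ℝ) (hg0 : 0 < g0) (hg1 : 0 < g1) (hg2 : 0 < g2)
    (hB : 0 < B) (hB0 : B ≤ g0)
    (h10 : g1 ≤ 2 * g0) (h12 : g1 ≤ 2 * g2) (h21 : g2 ≤ 2 * g1) (hw : |w| ≤ B) :
    |(-(g0 * (g1 - g0) * g2)) * x ^ 2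
      + ((g2 - g1) * g1 ^ 2 + w ^ 2 * g2 + w ^ 2 * g1) * y ^ 2
      + (w * (g1 * g2 - 2 * g0 * g2 - g0 * g1)) * (x * y)|
    ≤ (4 * |g1 - g0| + 4 * |g2 - g1| + 15 * B) * g0 ^ 2 * (x ^ 2 + y ^ 2) := by
  have hd0n : (0:ℝ) ≤ |g1 - g0| := abs_nonneg _
  have hd1n : (0:ℝ) ≤ |g2 - g1| := abs_nonneg _
  have hw2 : w ^ 2 ≤ B ^ 2 := by
    have := abs_le.mp hw
    nlinarith
  have hg24 : g2 ≤ 4 * g0 := by linarith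
  have hg1sq : g1 ^ 2 ≤ 4 * g0 ^ 2 := by nlinarith
  have hA1 : |(-(g0 * (g1 - g0) * g2))| ≤ 4 * |g1 - g0| * g0 ^ 2 := by
    rw [abs_neg, abs_mul, abs_mul, abs_of_pos hg0, abs_of_pos hg2]
    nlinarith [mul_le_mul_of_nonneg_left hg24 (mul_nonneg hg0.le hd0n)]
  have hA2 : |(g2 - g1) * g1 ^ 2 + w ^ 2 * g2 + w ^ 2 * g1|
      ≤ (4 * |g2 - g1| + 6 * B) * g0 ^ 2 := by
    have t1 : |(g2 - g1) * g1 ^ 2| ≤ 4 * |g2 - g1| * g0 ^ 2 := by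
      rw [abs_mul, abs_of_pos (by positivity : (0:ℝ) < g1 ^ 2)]
      nlinarith [mul_le_mul_of_nonneg_left hg1sq hd1n]
    have t2 : |w ^ 2 * g2| ≤ 4 * B ^ 2 * g0 := by
      rw [abs_mul, abs_of_pos hg2, abs_of_nonneg (sq_nonneg w)]
      nlinarith [sq_nonneg w, sq_nonneg B]
    have t3 : |w ^ 2 * g1| ≤ 2 * B ^ 2 * g0 := by
      rw [abs_mul, abs_of_pos hg1, abs_of_nonneg (sq_nonneg w)]
      nlinarith [sq_nonneg w]
    have hBB : 6 * B ^ 2 * g0 ≤ 6 * B * g0 ^ 2 := by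
      nlinarith [mul_le_mul_of_nonneg_left hB0 (mul_nonneg hB.le hg0.le)]
    calc |(g2 - g1) * g1 ^ 2 + w ^ 2 * g2 + w ^ 2 * g1|
        ≤ |(g2 - g1) * g1 ^ 2| + |w ^ 2 * g2| + |w ^ 2 * g1| := by
          calc _ ≤ |(g2 - g1) * g1 ^ 2 + w ^ 2 * g2| + |w ^ 2 * g1| := abs_add_le _ _
            _ ≤ _ := by linarith [abs_add_le ((g2 - g1) * g1 ^ 2) (w ^ 2 * g2)]
      _ ≤ 4 * |g2 - g1| * g0 ^ 2 + 4 * B ^ 2 * g0 + 2 * B ^ 2 * g0 := by linarith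
      _ ≤ (4 * |g2 - g1| + 6 * B) * g0 ^ 2 := by nlinarith
  have hA3 : |w * (g1 * g2 - 2 * g0 * g2 - g0 * g1)| ≤ 18 * B * g0 ^ 2 := by
    rw [abs_mul]
    have h5 : |g1 * g2 - 2 * g0 * g2 - g0 * g1| ≤ 18 * g0 ^ 2 := by
      rw [abs_le]
      constructor <;> nlinarith
    nlinarith [abs_nonneg w, abs_nonneg (g1 * g2 - 2 * g0 * g2 - g0 * g1), hB.le, sq_nonneg g0]
  have hu01 : |x * y| ≤ (x ^ 2 + y ^ 2) / 2 := abs_mul_le_half x y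
  refine (abs_triple _ _ _ _ _).trans ?_
  have e1 := mul_le_mul_of_nonneg_right hA1 (sq_nonneg x)
  have e2 := mul_le_mul_of_nonneg_right hA2 (sq_nonneg y)
  have e3 := mul_le_mul hA3 hu01 (abs_nonneg _) (by positivity)
  nlinarith [mul_nonneg (mul_nonneg hd0n (sq_nonneg g0)) (sq_nonneg y),
    mul_nonneg (mul_nonneg hd1n (sq_nonneg g0)) (sq_nonneg x),
    mul_nonneg (mul_nonneg hB.le (sq_nonneg g0)) (sq_nonneg x)]

lemma Qbound (B g1 g2 w y z : ℝ) (hg1 : 0 < g1) (hg2 : 0 < g2)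
    (hB2 : B ≤ g2) (h12 : g1 ≤ 2 * g2) (hw : |w| ≤ B) :
    |g2 * z ^ 2 + w * (y * z) - g1 * y ^ 2| ≤ 3 * (g2 * (y ^ 2 + z ^ 2)) := by
  have hmul : |w * (y * z)| ≤ g2 * ((y ^ 2 + z ^ 2) / 2) := by
    rw [abs_mul]
    have h1 := abs_mul_le_half y z
    have h2 : |w| ≤ g2 := le_trans hw hB2
    nlinarith [abs_nonneg w, abs_nonneg (y * z)]
  have h3 := abs_le.mp hmul
  have m1 : g1 * y ^ 2 ≤ 2 * g2 * y ^ 2 := by nlinarith [sq_nonneg y]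
  have m2 : 0 ≤ g2 * y ^ 2 := by positivity
  have m3 : 0 ≤ g2 * z ^ 2 := by positivity
  have m4 : 0 ≤ g1 * y ^ 2 := by positivity
  rw [abs_le]
  constructor <;> nlinarith [h3.1, h3.2]

/-- Core two-step bound over plain reals. `ΔK` stands for `K(n+2) - K(n)`. -/
lemma two_core (B g0 g1 g2 w u0 u1 u2 K ΔK : ℝ)
    (hg0 : 0 < g0) (hg1 : 0 < g1) (hg2 : 0 < g2) (h1g : 1 ≤ g0)
    (hB : 0 < B) (hB0 : B ≤ g0) (hB1 : B ≤ g1) (hB2 : B ≤ g2)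
    (h01 : g0 ≤ 2 * g1) (h10 : g1 ≤ 2 * g0) (h12 : g1 ≤ 2 * g2) (h21 : g2 ≤ 2 * g1)
    (hd0 : |g1 - g0| ≤ 1 / 12) (hd1 : |g2 - g1| ≤ 1 / 12) (hw : |w| ≤ B)
    (hK : 0 < K) (hS0K : g0 * (u0 ^ 2 + u1 ^ 2) ≤ 2 * K)
    (hS1K : g0 * (u1 ^ 2 + u2 ^ 2) ≤ 6 * K)
    (hid : g1 ^ 2 * g2 * ΔK
      = (g1 - g0) *
          ((-(g0 * (g1 - g0) * g2)) * u0 ^ 2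
            + ((g2 - g1) * g1 ^ 2 + w ^ 2 * g2 + w ^ 2 * g1) * u1 ^ 2
            + (w * (g1 * g2 - 2 * g0 * g2 - g0 * g1)) * (u0 * u1))
        + ((g2 - g1) - (g1 - g0)) * g1 ^ 2 *
            (g2 * u2 ^ 2 + w * (u1 * u2) - g1 * u1 ^ 2)) :
    |ΔK| ≤ ((32 + 480 * B) * (|g1 - g0| / g0 ^ 2)
        + 4608 * (|(g2 - g1) - (g1 - g0)| / g0)) * K := by
  have hd0n : (0:ℝ) ≤ |g1 - g0| := abs_nonneg _
  have hd1n : (0:ℝ) ≤ |g2 - g1| := abs_nonneg _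
  have hDn : (0:ℝ) ≤ |(g2 - g1) - (g1 - g0)| := abs_nonneg _
  have hS0 : (0:ℝ) ≤ u0 ^ 2 + u1 ^ 2 := by positivity
  have hS1 : (0:ℝ) ≤ u1 ^ 2 + u2 ^ 2 := by positivity
  have hmain : g1 ^ 2 * g2 * |ΔK|
      ≤ |g1 - g0| * ((4 * |g1 - g0| + 4 * |g2 - g1| + 15 * B) * g0 ^ 2 * (u0 ^ 2 + u1 ^ 2))
        + |(g2 - g1) - (g1 - g0)| * (g1 ^ 2 * (3 * (g2 * (u1 ^ 2 + u2 ^ 2)))) := by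
    have e0 : g1 ^ 2 * g2 * |ΔK| = |g1 ^ 2 * g2 * ΔK| := by
      rw [abs_mul, abs_of_pos (by positivity : (0:ℝ) < g1 ^ 2 * g2)]
    rw [e0, hid]
    refine (abs_comb _ _ _ _ _ (sq_nonneg g1)).trans ?_
    have q1 := mul_le_mul_of_nonneg_left
      (Pbound B g0 g1 g2 w u0 u1 hg0 hg1 hg2 hB hB0 h10 h12 h21 hw) hd0n
    have q2 : |(g2 - g1) - (g1 - g0)| * g1 ^ 2 * |g2 * u2 ^ 2 + w * (u1 * u2) - g1 * u1 ^ 2|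
        ≤ |(g2 - g1) - (g1 - g0)| * (g1 ^ 2 * (3 * (g2 * (u1 ^ 2 + u2 ^ 2)))) := by
      rw [mul_assoc]
      refine mul_le_mul_of_nonneg_left ?_ hDn
      refine mul_le_mul_of_nonneg_left ?_ (sq_nonneg g1)
      have := Qbound B g1 g2 w u1 u2 hg1 hg2 hB2 h12 hw
      linarith
    linarith
  clear hid
  have h16 : g0 ^ 3 / 16 ≤ g1 ^ 2 * g2 := by
    have ha : (g0 / 2) ^ 2 ≤ g1 ^ 2 := by nlinarith
    calc g0 ^ 3 / 16 = (g0 / 2) ^ 2 * (g0 / 4) := by ring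
      _ ≤ g1 ^ 2 * g2 := mul_le_mul ha (by linarith) (by positivity) (sq_nonneg _)
  have hR : |g1 - g0| * ((4 * |g1 - g0| + 4 * |g2 - g1| + 15 * B) * g0 ^ 2 * (u0 ^ 2 + u1 ^ 2))
        + |(g2 - g1) - (g1 - g0)| * (g1 ^ 2 * (3 * (g2 * (u1 ^ 2 + u2 ^ 2))))
      ≤ (g0 ^ 3 / 16) * (((32 + 480 * B) * (|g1 - g0| / g0 ^ 2)
          + 4608 * (|(g2 - g1) - (g1 - g0)| / g0)) * K) := by
    have hceq : (g0 ^ 3 / 16) * (((32 + 480 * B) * (|g1 - g0| / g0 ^ 2)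
          + 4608 * (|(g2 - g1) - (g1 - g0)| / g0)) * K)
        = (2 + 30 * B) * |g1 - g0| * g0 * K
          + 288 * |(g2 - g1) - (g1 - g0)| * g0 ^ 2 * K := by
      field_simp
      ring
    rw [hceq]
    have r1 : |g1 - g0| * ((4 * |g1 - g0| + 4 * |g2 - g1| + 15 * B) * g0 ^ 2 * (u0 ^ 2 + u1 ^ 2))
        ≤ (2 + 30 * B) * |g1 - g0| * g0 * K := by
      have hc1 : 4 * |g1 - g0| + 4 * |g2 - g1| + 15 * B ≤ 1 + 15 * B := by linarith
      calc |g1 - g0| * ((4 * |g1 - g0| + 4 * |g2 - g1| + 15 * B) * g0 ^ 2 * (u0 ^ 2 + u1 ^ 2))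
          ≤ |g1 - g0| * ((1 + 15 * B) * g0 ^ 2 * (u0 ^ 2 + u1 ^ 2)) :=
            mul_le_mul_of_nonneg_left
              (mul_le_mul_of_nonneg_right
                (mul_le_mul_of_nonneg_right hc1 (sq_nonneg _)) hS0) hd0n
        _ = (1 + 15 * B) * |g1 - g0| * g0 * (g0 * (u0 ^ 2 + u1 ^ 2)) := by ring
        _ ≤ (1 + 15 * B) * |g1 - g0| * g0 * (2 * K) := by
            refine mul_le_mul_of_nonneg_left hS0K ?_
            have hb' : (0:ℝ) ≤ 1 + 15 * B := by linarith
            exact mul_nonneg (mul_nonneg hb' hd0n) hg0.le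
        _ = (2 + 30 * B) * |g1 - g0| * g0 * K := by ring
    have r2 : |(g2 - g1) - (g1 - g0)| * (g1 ^ 2 * (3 * (g2 * (u1 ^ 2 + u2 ^ 2))))
        ≤ 288 * |(g2 - g1) - (g1 - g0)| * g0 ^ 2 * K := by
      have hg1sq : g1 ^ 2 ≤ 4 * g0 ^ 2 := by nlinarith
      have h3g2 : 3 * (g2 * (u1 ^ 2 + u2 ^ 2)) ≤ 12 * (g0 * (u1 ^ 2 + u2 ^ 2)) := by
        nlinarith [mul_le_mul_of_nonneg_right (show g2 ≤ 4 * g0 by linarith) hS1]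
      calc |(g2 - g1) - (g1 - g0)| * (g1 ^ 2 * (3 * (g2 * (u1 ^ 2 + u2 ^ 2))))
          ≤ |(g2 - g1) - (g1 - g0)| * ((4 * g0 ^ 2) * (12 * (g0 * (u1 ^ 2 + u2 ^ 2)))) :=
            mul_le_mul_of_nonneg_left
              (mul_le_mul hg1sq h3g2 (by positivity) (by positivity)) hDn
        _ = 8 * |(g2 - g1) - (g1 - g0)| * g0 ^ 2 * (6 * (g0 * (u1 ^ 2 + u2 ^ 2))) := by ring
        _ ≤ 8 * |(g2 - g1) - (g1 - g0)| * g0 ^ 2 * (6 * (6 * K)) := by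
            refine mul_le_mul_of_nonneg_left ?_ (by positivity)
            linarith
        _ = 288 * |(g2 - g1) - (g1 - g0)| * g0 ^ 2 * K + 0 * K := by ring
        _ ≤ 288 * |(g2 - g1) - (g1 - g0)| * g0 ^ 2 * K := by linarith [hK.le]
    linarith
  have hfin : (g0 ^ 3 / 16) * |ΔK|
      ≤ (g0 ^ 3 / 16) * (((32 + 480 * B) * (|g1 - g0| / g0 ^ 2)
          + 4608 * (|(g2 - g1) - (g1 - g0)| / g0)) * K) :=
    le_trans (le_trans (mul_le_mul_of_nonneg_right h16 (abs_nonneg _)) hmain) hR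
  exact le_of_mul_le_mul_left hfin (by positivity)

/-- Core one-step bound over plain reals. `ΔK` stands for `K(n+1) - K(n)`. -/
lemma one_core (B g0 g1 w u0 u1 ΔK : ℝ)
    (hg0 : 0 < g0) (hg1 : 0 < g1) (hB1 : B ≤ g1) (h01 : g0 ≤ 2 * g1)
    (hw : |w| ≤ B)
    (hid : g1 * ΔK = (g1 - g0) * (g1 * u1 ^ 2 + w * (u0 * u1) - g0 * u0 ^ 2)) :
    |ΔK| ≤ 3 * |g1 - g0| * (u0 ^ 2 + u1 ^ 2) := by
  have hX := Xbound B g0 g1 w u0 u1 hg0 hg1 hB1 h01 hw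
  have h4 : g1 * |ΔK| = |g1 - g0| * |g1 * u1 ^ 2 + w * (u0 * u1) - g0 * u0 ^ 2| := by
    have h5 := congrArg abs hid
    rw [abs_mul, abs_mul, abs_of_pos hg1] at h5
    exact h5
  have hcalc : g1 * |ΔK| ≤ g1 * (3 * |g1 - g0| * (u0 ^ 2 + u1 ^ 2)) := by
    rw [h4]
    calc |g1 - g0| * |g1 * u1 ^ 2 + w * (u0 * u1) - g0 * u0 ^ 2|
        ≤ |g1 - g0| * (3 * (g1 * (u0 ^ 2 + u1 ^ 2))) :=
          mul_le_mul_of_nonneg_left hX (abs_nonneg _)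
      _ = g1 * (3 * |g1 - g0| * (u0 ^ 2 + u1 ^ 2)) := by ring
  exact le_of_mul_le_mul_left hcalc hg1

variable {γ : ℕ → ℝ} {p : ℕ → ℝ → ℝ}

lemma pstep (hpos : ∀ n, 0 < γ n)
    (hprec : ∀ (n : ℕ) (ω : ℝ), γ (n + 1) * p (n + 2) ω = ω * p (n + 1) ω - γ n * p n ω)
    (n : ℕ) (ω : ℝ) : p (n + 2) ω = (ω * p (n + 1) ω - γ n * p n ω) / γ (n + 1) := by
  rw [eq_div_iff (hpos (n + 1)).ne', mul_comm]
  exact hprec n ω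

lemma pcont (hpos : ∀ n, 0 < γ n) (hp0 : ∀ ω : ℝ, p 0 ω = 1)
    (hp1 : ∀ ω : ℝ, γ 0 * p 1 ω = ω * p 0 ω)
    (hprec : ∀ (n : ℕ) (ω : ℝ), γ (n + 1) * p (n + 2) ω = ω * p (n + 1) ω - γ n * p n ω) :
    ∀ n, Continuous fun ω => p n ω := by
  have key : ∀ n, Continuous (fun ω => p n ω) ∧ Continuous (fun ω => p (n + 1) ω) := by
    intro n
    induction n with
    | zero =>
      constructor
      · have h0 : (fun ω : ℝ => p 0 ω) = fun _ => 1 := funext hp0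
        rw [h0]; exact continuous_const
      · have h1 : (fun ω : ℝ => p 1 ω) = fun ω => ω / γ 0 := by
          funext ω
          rw [eq_div_iff (hpos 0).ne', mul_comm]
          simpa [hp0 ω] using hp1 ω
        rw [h1]; exact continuous_id.div_const _
    | succ k ih =>
      refine ⟨ih.2, ?_⟩
      have h : (fun ω : ℝ => p (k + 2) ω)
          = fun ω => (ω * p (k + 1) ω - γ k * p k ω) / γ (k + 1) :=
        funext fun ω => pstep hpos hprec k ω
      rw [h]
      exact ((continuous_id.mul ih.2).sub (continuous_const.mul ih.1)).div_const _
  exact fun n => (key n).1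

lemma Spos (hpos : ∀ n, 0 < γ n) (hp0 : ∀ ω : ℝ, p 0 ω = 1)
    (hprec : ∀ (n : ℕ) (ω : ℝ), γ (n + 1) * p (n + 2) ω = ω * p (n + 1) ω - γ n * p n ω) :
    ∀ (n : ℕ) (ω : ℝ), 0 < p n ω ^ 2 + p (n + 1) ω ^ 2 := by
  intro n ω
  induction n with
  | zero => have := hp0 ω; nlinarith [sq_nonneg (p 1 ω)]
  | succ k ih =>
    rcases eq_or_ne (p (k + 1) ω) 0 with h1 | h1
    · have hk : p k ω ≠ 0 := by
        intro h0
        rw [h0, h1] at ih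
        norm_num at ih
      have h2 : p (k + 2) ω ≠ 0 := by
        intro h2
        have hr := hprec k ω
        rw [h1, h2] at hr
        have : γ k * p k ω = 0 := by linarith
        rcases mul_eq_zero.mp this with h | h
        · exact (hpos k).ne' h
        · exact hk h
      have : 0 < p (k + 2) ω ^ 2 :=
        lt_of_le_of_ne (sq_nonneg _) (Ne.symm (pow_ne_zero 2 h2))
      nlinarith [sq_nonneg (p (k + 1) ω)]
    · have : 0 < p (k + 1) ω ^ 2 :=
        lt_of_le_of_ne (sq_nonneg _) (Ne.symm (pow_ne_zero 2 h1))
      nlinarith [sq_nonneg (p (k + 2) ω)]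

lemma id_one (hpos : ∀ n, 0 < γ n)
    (hprec : ∀ (n : ℕ) (ω : ℝ), γ (n + 1) * p (n + 2) ω = ω * p (n + 1) ω - γ n * p n ω)
    (n : ℕ) (ω : ℝ) :
    γ (n + 1) * (KK γ p (n + 1) ω - KK γ p n ω)
      = (γ (n + 1) - γ n) *
        (γ (n + 1) * p (n + 1) ω ^ 2 + ω * (p n ω * p (n + 1) ω) - γ n * p n ω ^ 2) := by
  have h := pstep hpos hprec n ω
  simp only [KK]
  rw [h]
  have h1 := (hpos (n + 1)).ne'
  field_simp
  ring

lemma id_two (hpos : ∀ n, 0 < γ n)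
    (hprec : ∀ (n : ℕ) (ω : ℝ), γ (n + 1) * p (n + 2) ω = ω * p (n + 1) ω - γ n * p n ω)
    (n : ℕ) (ω : ℝ) :
    γ (n + 1) ^ 2 * γ (n + 2) * (KK γ p (n + 2) ω - KK γ p n ω)
      = (γ (n + 1) - γ n) *
          ((-(γ n * (γ (n + 1) - γ n) * γ (n + 2))) * p n ω ^ 2
            + ((γ (n + 2) - γ (n + 1)) * γ (n + 1) ^ 2 + ω ^ 2 * γ (n + 2) + ω ^ 2 * γ (n + 1))
              * p (n + 1) ω ^ 2
            + (ω * (γ (n + 1) * γ (n + 2) - 2 * γ n * γ (n + 2) - γ n * γ (n + 1)))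
              * (p n ω * p (n + 1) ω))
        + ((γ (n + 2) - γ (n + 1)) - (γ (n + 1) - γ n)) * γ (n + 1) ^ 2 *
            (γ (n + 2) * p (n + 2) ω ^ 2 + ω * (p (n + 1) ω * p (n + 2) ω)
              - γ (n + 1) * p (n + 1) ω ^ 2) := by
  have h3 : p (n + 2 + 1) ω = (ω * p (n + 1 + 1) ω - γ (n + 1) * p (n + 1) ω) / γ (n + 1 + 1) :=
    pstep hpos hprec (n + 1) ω
  have h2 := pstep hpos hprec n ω
  simp only [KK]
  rw [h3]
  norm_num
  rw [h2]
  have h1 := (hpos (n + 1)).ne'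
  have h2' := (hpos (n + 2)).ne'
  field_simp
  ring

lemma cc_nonneg (hpos : ∀ n, 0 < γ n) (B : ℝ) (hB : 0 < B) (k : ℕ) : 0 ≤ cc γ B k := by
  unfold cc
  have h1 : (0:ℝ) ≤ |γ (k + 1) - γ k| / γ k ^ 2 := div_nonneg (abs_nonneg _) (sq_nonneg _)
  have h2 : (0:ℝ) ≤ |(γ (k + 2) - γ (k + 1)) - (γ (k + 1) - γ k)| / γ k :=
    div_nonneg (abs_nonneg _) (hpos k).le
  nlinarith

lemma cc_summable (hC6 : Summable (fun n => |γ (n + 1) - γ n| / γ n ^ 2))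
    (hC7 : Summable (fun n => |(γ (n + 2) - γ (n + 1)) - (γ (n + 1) - γ n)| / γ n))
    (B : ℝ) : Summable (cc γ B) :=
  (hC6.mul_left _).add (hC7.mul_left _)


lemma key (hpos : ∀ n, 0 < γ n)
    (hp0 : ∀ ω : ℝ, p 0 ω = 1)
    (hp1 : ∀ ω : ℝ, γ 0 * p 1 ω = ω * p 0 ω)
    (hprec : ∀ (n : ℕ) (ω : ℝ), γ (n + 1) * p (n + 2) ω = ω * p (n + 1) ω - γ n * p n ω)
    (hC1 : Tendsto γ atTop atTop)
    (hC2 : Tendsto (fun n => γ (n + 1) - γ n) atTop (nhds 0))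
    (hC6 : Summable (fun n => |γ (n + 1) - γ n| / γ n ^ 2))
    (hC7 : Summable (fun n => |(γ (n + 2) - γ (n + 1)) - (γ (n + 1) - γ n)| / γ n))
    (B : ℝ) (hB : 0 < B) :
    ∃ (N : ℕ) (m M : ℝ), 0 < m ∧
      (∀ n, N ≤ n → ∀ ω : ℝ, |ω| ≤ B →
        m ≤ γ n * (p n ω ^ 2 + p (n + 1) ω ^ 2) ∧
        γ n * (p n ω ^ 2 + p (n + 1) ω ^ 2) ≤ M) ∧
      UniformCauchySeqOn (fun n ω => γ n * (p n ω ^ 2 + p (n + 1) ω ^ 2)) atTop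
        {ω : ℝ | |ω| ≤ B} := by
  classical
  -- base index N0
  obtain ⟨N1, hN1⟩ := tendsto_atTop_atTop.mp hC1 (max B 1)
  have h2' : ∀ᶠ n in atTop, |γ (n + 1) - γ n| ≤ 1 / 12 := by
    have h := Metric.tendsto_nhds.mp hC2 (1 / 12) (by norm_num)
    filter_upwards [h] with n hn
    rw [Real.dist_eq, sub_zero] at hn
    exact hn.le
  obtain ⟨N2, hN2⟩ := eventually_atTop.mp h2'
  set N0 := max N1 N2 with hN0def
  have hg1 : ∀ k, N0 ≤ k → 1 ≤ γ k := fun k hk =>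
    le_trans (le_max_right B 1) (hN1 k (le_trans (le_max_left N1 N2) hk))
  have hgB : ∀ k, N0 ≤ k → B ≤ γ k := fun k hk =>
    le_trans (le_max_left B 1) (hN1 k (le_trans (le_max_left N1 N2) hk))
  have hD : ∀ k, N0 ≤ k → |γ (k + 1) - γ k| ≤ 1 / 12 := fun k hk =>
    hN2 k (le_trans (le_max_right N1 N2) hk)
  have hcmp : ∀ k, N0 ≤ k → γ k ≤ 2 * γ (k + 1) ∧ γ (k + 1) ≤ 2 * γ k := by
    intro k hk
    have h1 := hg1 k hk
    have h2 := abs_le.mp (hD k hk)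
    constructor <;> linarith [h2.1, h2.2]
  -- basic facts
  have hSpos : ∀ (n : ℕ) (ω : ℝ), 0 < p n ω ^ 2 + p (n + 1) ω ^ 2 := Spos hpos hp0 hprec
  have hbasic : ∀ n, N0 ≤ n → ∀ ω : ℝ, |ω| ≤ B →
      γ n * (p n ω ^ 2 + p (n + 1) ω ^ 2) ≤ 2 * KK γ p n ω ∧
      KK γ p n ω ≤ (3 / 2) * (γ n * (p n ω ^ 2 + p (n + 1) ω ^ 2)) := by
    intro n hn ω hω
    have hg := hgB n hn
    have hmul : |ω * (p n ω * p (n + 1) ω)| ≤ γ n * ((p n ω ^ 2 + p (n + 1) ω ^ 2) / 2) := by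
      rw [abs_mul]
      have h1 := abs_mul_le_half (p n ω) (p (n + 1) ω)
      have h2 : |ω| ≤ γ n := le_trans hω hg
      nlinarith [abs_nonneg ω, abs_nonneg (p n ω * p (n + 1) ω)]
    have h3 := abs_le.mp hmul
    unfold KK
    constructor <;> nlinarith [h3.1, h3.2]
  have hKpos : ∀ n, N0 ≤ n → ∀ ω : ℝ, |ω| ≤ B → 0 < KK γ p n ω := by
    intro n hn ω hω
    have h1 := (hbasic n hn ω hω).1
    have h2 := mul_pos (hpos n) (hSpos n ω)
    linarith
  -- one-step estimates
  have honeS : ∀ n, N0 ≤ n → ∀ ω : ℝ, |ω| ≤ B →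
      |KK γ p (n + 1) ω - KK γ p n ω|
        ≤ 3 * |γ (n + 1) - γ n| * (p n ω ^ 2 + p (n + 1) ω ^ 2) := by
    intro n hn ω hω
    exact one_core B (γ n) (γ (n + 1)) ω (p n ω) (p (n + 1) ω) _
      (hpos n) (hpos (n + 1)) (hgB (n + 1) (by omega)) (hcmp n hn).1 hω
      (id_one hpos hprec n ω)
  have hhalf : ∀ n, N0 ≤ n → ∀ ω : ℝ, |ω| ≤ B →
      |KK γ p (n + 1) ω - KK γ p n ω| ≤ (1 / 2) * KK γ p n ω := by
    intro n hn ω hω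
    have h1 := honeS n hn ω hω
    have h2 := hD n hn
    have h3 := (hbasic n hn ω hω).1
    have h4 := hg1 n hn
    have hSp := (hSpos n ω).le
    have hint1 : 0 ≤ (1 / 12 - |γ (n + 1) - γ n|) * (p n ω ^ 2 + p (n + 1) ω ^ 2) :=
      mul_nonneg (by linarith) hSp
    have hint2 : 0 ≤ (γ n - 1) * (p n ω ^ 2 + p (n + 1) ω ^ 2) :=
      mul_nonneg (by linarith) hSp
    nlinarith
  have hstep : ∀ n, N0 ≤ n → ∀ ω : ℝ, |ω| ≤ B →
      KK γ p (n + 1) ω ≤ (3 / 2) * KK γ p n ω ∧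
      (1 / 2) * KK γ p n ω ≤ KK γ p (n + 1) ω := by
    intro n hn ω hω
    have h := abs_le.mp (hhalf n hn ω hω)
    constructor <;> linarith [h.1, h.2]
  have hS1K : ∀ n, N0 ≤ n → ∀ ω : ℝ, |ω| ≤ B →
      γ n * (p (n + 1) ω ^ 2 + p (n + 2) ω ^ 2) ≤ 6 * KK γ p n ω := by
    intro n hn ω hω
    have h1 : γ (n + 1) * (p (n + 1) ω ^ 2 + p (n + 2) ω ^ 2) ≤ 2 * KK γ p (n + 1) ω :=
      (hbasic (n + 1) (by omega) ω hω).1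
    have h2 := (hstep n hn ω hω).1
    have h3 := (hcmp n hn).1
    have hSp := (hSpos (n + 1) ω).le
    have hint := mul_le_mul_of_nonneg_right h3 hSp
    nlinarith
  -- two-step estimate
  have htwoK : ∀ n, N0 ≤ n → ∀ ω : ℝ, |ω| ≤ B →
      |KK γ p (n + 2) ω - KK γ p n ω| ≤ cc γ B n * KK γ p n ω := by
    intro n hn ω hω
    have h := two_core B (γ n) (γ (n + 1)) (γ (n + 2)) ω (p n ω) (p (n + 1) ω) (p (n + 2) ω)
      (KK γ p n ω) (KK γ p (n + 2) ω - KK γ p n ω)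
      (hpos n) (hpos (n + 1)) (hpos (n + 2)) (hg1 n hn) hB (hgB n hn)
      (hgB (n + 1) (by omega)) (hgB (n + 2) (by omega))
      (hcmp n hn).1 (hcmp n hn).2 (hcmp (n + 1) (by omega)).1 (hcmp (n + 1) (by omega)).2
      (hD n hn) (hD (n + 1) (by omega)) hω (hKpos n hn ω hω)
      (hbasic n hn ω hω).1 (hS1K n hn ω hω) (id_two hpos hprec n ω)
    exact h
  -- summability machinery
  have hcnn : ∀ k, 0 ≤ cc γ B k := cc_nonneg hpos B hB
  have hcs : Summable (cc γ B) := cc_summable hC6 hC7 B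
  set t : ℕ → ℝ := fun n => ∑' k, cc γ B (k + n) with htdef
  have hts : ∀ n, Summable fun k => cc γ B (k + n) := fun n => (summable_nat_add_iff n).mpr hcs
  have htnn : ∀ n, 0 ≤ t n := fun n => tsum_nonneg fun k => hcnn _
  have htstep : ∀ n, t (n + 1) ≤ t n := by
    intro n
    have h1 : t n = cc γ B (0 + n) + ∑' k, cc γ B (k + 1 + n) := Summable.tsum_eq_zero_add (hts n)
    have h2 : ∑' k, cc γ B (k + 1 + n) = t (n + 1) := by
      apply tsum_congr
      intro k
      congr 1
      omega
    rw [h2] at h1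
    have := hcnn (0 + n)
    linarith
  have htmono : ∀ a b, a ≤ b → t b ≤ t a := by
    intro a b hab
    induction b, hab using Nat.le_induction with
    | base => exact le_rfl
    | succ b hb ih => exact le_trans (htstep b) ih
  have htlim : Tendsto t atTop (nhds 0) := tendsto_sum_nat_add (cc γ B)
  have hpartial : ∀ n j, ∑ k ∈ Finset.range j, cc γ B (n + k) ≤ t n := by
    intro n j
    have h1 : ∑ k ∈ Finset.range j, cc γ B (n + k)
        = ∑ k ∈ Finset.range j, (fun k => cc γ B (k + n)) k := by
      apply Finset.sum_congr rfl
      intro k _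
      simp only []
      congr 1
      omega
    rw [h1]
    exact Summable.sum_le_tsum (Finset.range j) (fun i _ => hcnn _) (hts n)
  have hterm : ∀ n k, n ≤ k → cc γ B k ≤ t n := by
    intro n k hnk
    have h1 : cc γ B k = (fun i => cc γ B (i + n)) (k - n) := by
      simp only []
      congr 1
      omega
    rw [h1]
    exact Summable.le_tsum (hts n) (k - n) fun i _ => hcnn _
  have hevensum : ∀ n j, ∑ i ∈ Finset.range j, cc γ B (n + 2 * i) ≤ t n := by
    intro n j
    have h1 : ∀ j, ∑ i ∈ Finset.range j, cc γ B (n + 2 * i)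
        ≤ ∑ k ∈ Finset.range (2 * j), cc γ B (n + k) := by
      intro j
      induction j with
      | zero => simp
      | succ j ih =>
        rw [Finset.sum_range_succ]
        have e2 : 2 * (j + 1) = 2 * j + 1 + 1 := by ring
        rw [e2, Finset.sum_range_succ, Finset.sum_range_succ]
        have h3 := hcnn (n + (2 * j + 1))
        linarith
    exact le_trans (h1 j) (hpartial n (2 * j))
  -- compactness, continuity
  have hcontp := pcont hpos hp0 hp1 hprec
  have hKcont : ∀ n, Continuous fun ω : ℝ => KK γ p n ω := by
    intro n
    unfold KK
    exact (continuous_const.mul (((hcontp n).pow 2).add ((hcontp (n + 1)).pow 2))).sub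
      ((continuous_id.mul (hcontp n)).mul (hcontp (n + 1)))
  have hsetIcc : {ω : ℝ | |ω| ≤ B} = Set.Icc (-B) B := by
    ext x
    simp [Set.mem_Icc, abs_le]
  have hcompact : IsCompact {ω : ℝ | |ω| ≤ B} := by
    rw [hsetIcc]
    exact isCompact_Icc
  have h0mem : (0 : ℝ) ∈ {ω : ℝ | |ω| ≤ B} := by
    simp only [Set.mem_setOf_eq, abs_zero]
    exact hB.le
  have h0B : |(0:ℝ)| ≤ B := by simpa using hB.le
  -- upper bound M
  obtain ⟨ω₀, hω₀mem, hω₀max⟩ := hcompact.exists_isMaxOn ⟨0, h0mem⟩ (hKcont N0).continuousOn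
  set M0 := KK γ p N0 ω₀ with hM0def
  have hM0 : ∀ ω : ℝ, |ω| ≤ B → KK γ p N0 ω ≤ M0 := fun ω hω => (isMaxOn_iff.mp hω₀max) ω hω
  have hM0pos : 0 < M0 := lt_of_lt_of_le (hKpos N0 le_rfl 0 h0B) (hM0 0 h0B)
  set M := (3 / 2) * M0 * Real.exp (t N0) with hMdef
  have hMpos : 0 < M :=
    mul_pos (mul_pos (by norm_num) hM0pos) (Real.exp_pos _)
  have hupper : ∀ n, N0 ≤ n → ∀ ω : ℝ, |ω| ≤ B → KK γ p n ω ≤ M := by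
    intro n hn ω hω
    obtain ⟨d, rfl⟩ := Nat.exists_eq_add_of_le hn
    have claim : ∀ m : ℕ,
        KK γ p (N0 + m) ω ≤ (3 / 2) * M0 * Real.exp (∑ k ∈ Finset.range m, cc γ B (N0 + k))
        ∧ KK γ p (N0 + m + 1) ω
            ≤ (3 / 2) * M0 * Real.exp (∑ k ∈ Finset.range (m + 1), cc γ B (N0 + k)) := by
      intro m
      induction m with
      | zero =>
        constructor
        · simp only [Finset.range_zero, Finset.sum_empty, Real.exp_zero, mul_one, Nat.add_zero]
          linarith [hM0 ω hω, hM0pos]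
        · have h1 := (hstep N0 le_rfl ω hω).1
          have h2 := hM0 ω hω
          have h3 : (1:ℝ) ≤ Real.exp (∑ k ∈ Finset.range 1, cc γ B (N0 + k)) :=
            Real.one_le_exp (Finset.sum_nonneg fun i _ => hcnn _)
          have hK0 := (hKpos N0 le_rfl ω hω).le
          have goal1 : KK γ p (N0 + 0 + 1) ω ≤ (3/2) * M0 := by
            simp only [Nat.add_zero]
            linarith
          calc KK γ p (N0 + 0 + 1) ω ≤ (3/2) * M0 := goal1
            _ ≤ (3 / 2) * M0 * Real.exp (∑ k ∈ Finset.range (0 + 1), cc γ B (N0 + k)) := by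
                nlinarith [hM0pos]
      | succ m ih =>
        refine ⟨ih.2, ?_⟩
        show KK γ p (N0 + m + 2) ω
          ≤ (3 / 2) * M0 * Real.exp (∑ k ∈ Finset.range (m + 2), cc γ B (N0 + k))
        have habs := abs_le.mp (htwoK (N0 + m) (by omega) ω hω)
        have hKm := ih.1
        have hKmpos := hKpos (N0 + m) (by omega) ω hω
        have hcm := hcnn (N0 + m)
        have h1 : KK γ p (N0 + m + 2) ω ≤ (1 + cc γ B (N0 + m)) * KK γ p (N0 + m) ω := by
          nlinarith [habs.2]
        have h2 : (1 + cc γ B (N0 + m)) * KK γ p (N0 + m) ω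
            ≤ Real.exp (cc γ B (N0 + m))
              * ((3 / 2) * M0 * Real.exp (∑ k ∈ Finset.range m, cc γ B (N0 + k))) := by
          have e1 : 1 + cc γ B (N0 + m) ≤ Real.exp (cc γ B (N0 + m)) := by
            linarith [Real.add_one_le_exp (cc γ B (N0 + m))]
          exact mul_le_mul e1 hKm hKmpos.le (Real.exp_pos _).le
        have h3 : Real.exp (cc γ B (N0 + m))
              * ((3 / 2) * M0 * Real.exp (∑ k ∈ Finset.range m, cc γ B (N0 + k)))
            = (3 / 2) * M0 * Real.exp (∑ k ∈ Finset.range (m + 1), cc γ B (N0 + k)) := by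
          rw [Finset.sum_range_succ, Real.exp_add]
          ring
        have h4 : Real.exp (∑ k ∈ Finset.range (m + 1), cc γ B (N0 + k))
            ≤ Real.exp (∑ k ∈ Finset.range (m + 2), cc γ B (N0 + k)) := by
          rw [Real.exp_le_exp]
          rw [Finset.sum_range_succ (n := m + 1)]
          linarith [hcnn (N0 + (m + 1))]
        calc KK γ p (N0 + m + 2) ω
            ≤ (3 / 2) * M0 * Real.exp (∑ k ∈ Finset.range (m + 1), cc γ B (N0 + k)) :=
              le_trans h1 (le_trans h2 (le_of_eq h3))
          _ ≤ (3 / 2) * M0 * Real.exp (∑ k ∈ Finset.range (m + 2), cc γ B (N0 + k)) := by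
              have : (0:ℝ) ≤ (3 / 2) * M0 := by linarith
              nlinarith
    have h5 := (claim d).1
    have hSig : ∑ k ∈ Finset.range d, cc γ B (N0 + k) ≤ t N0 := hpartial N0 d
    have hexp : Real.exp (∑ k ∈ Finset.range d, cc γ B (N0 + k)) ≤ Real.exp (t N0) :=
      Real.exp_le_exp.mpr hSig
    calc KK γ p (N0 + d) ω
        ≤ (3 / 2) * M0 * Real.exp (∑ k ∈ Finset.range d, cc γ B (N0 + k)) := h5
      _ ≤ (3 / 2) * M0 * Real.exp (t N0) := by nlinarith
      _ = M := by rw [hMdef]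
  -- chain estimate
  have hchain : ∀ n, N0 ≤ n → ∀ ω : ℝ, |ω| ≤ B → ∀ j : ℕ,
      |KK γ p (n + 2 * j) ω - KK γ p n ω| ≤ M * ∑ i ∈ Finset.range j, cc γ B (n + 2 * i) := by
    intro n hn ω hω j
    induction j with
    | zero => simp
    | succ j ih =>
      have e1 : n + 2 * (j + 1) = n + 2 * j + 2 := by omega
      rw [e1, Finset.sum_range_succ]
      have h1 := htwoK (n + 2 * j) (by omega) ω hω
      have h2 := hupper (n + 2 * j) (by omega) ω hω
      have h3 := abs_sub_le (KK γ p (n + 2 * j + 2) ω) (KK γ p (n + 2 * j) ω) (KK γ p n ω)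
      have h4 : cc γ B (n + 2 * j) * KK γ p (n + 2 * j) ω ≤ cc γ B (n + 2 * j) * M :=
        mul_le_mul_of_nonneg_left h2 (hcnn _)
      have h5 : M * (∑ i ∈ Finset.range j, cc γ B (n + 2 * i) + cc γ B (n + 2 * j))
          = M * ∑ i ∈ Finset.range j, cc γ B (n + 2 * i) + cc γ B (n + 2 * j) * M := by ring
      rw [h5]
      linarith
  -- lower bound index and m0
  have he2 : ∀ᶠ n in atTop, t n < 1 / 2 := htlim.eventually_lt_const (by norm_num)
  obtain ⟨Nt, hNt⟩ := eventually_atTop.mp he2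
  set Nl := max N0 Nt with hNldef
  have hNlN : N0 ≤ Nl := le_max_left _ _
  have htNl : t Nl ≤ 1 / 2 := (hNt Nl (le_max_right _ _)).le
  obtain ⟨ω₁, hω₁mem, hω₁min⟩ := hcompact.exists_isMinOn ⟨0, h0mem⟩ (hKcont Nl).continuousOn
  set m0 := KK γ p Nl ω₁ with hm0def
  have hm0 : ∀ ω : ℝ, |ω| ≤ B → m0 ≤ KK γ p Nl ω := fun ω hω => (isMinOn_iff.mp hω₁min) ω hω
  have hm0pos : 0 < m0 := hKpos Nl hNlN ω₁ hω₁mem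
  have heven : ∀ ω : ℝ, |ω| ≤ B → ∀ j : ℕ,
      m0 * (1 - ∑ i ∈ Finset.range j, cc γ B (Nl + 2 * i)) ≤ KK γ p (Nl + 2 * j) ω := by
    intro ω hω j
    induction j with
    | zero =>
      simp only [Finset.range_zero, Finset.sum_empty, sub_zero, mul_one, Nat.mul_zero,
        Nat.add_zero]
      exact hm0 ω hω
    | succ j ih =>
      have hSig : ∑ i ∈ Finset.range j, cc γ B (Nl + 2 * i) ≤ 1 / 2 :=
        le_trans (hevensum Nl j) htNl
      have hcj : cc γ B (Nl + 2 * j) ≤ 1 / 2 :=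
        le_trans (hterm Nl (Nl + 2 * j) (by omega)) htNl
      have h1 := abs_le.mp (htwoK (Nl + 2 * j) (by omega) ω hω)
      have e1 : Nl + 2 * (j + 1) = Nl + 2 * j + 2 := by omega
      rw [e1, Finset.sum_range_succ]
      have hKjpos := hKpos (Nl + 2 * j) (by omega) ω hω
      have hSignn : 0 ≤ ∑ i ∈ Finset.range j, cc γ B (Nl + 2 * i) :=
        Finset.sum_nonneg fun i _ => hcnn _
      have hcnnj := hcnn (Nl + 2 * j)
      have hint1 : 0 ≤ (1 - cc γ B (Nl + 2 * j))
          * (KK γ p (Nl + 2 * j) ω - m0 * (1 - ∑ i ∈ Finset.range j, cc γ B (Nl + 2 * i))) :=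
        mul_nonneg (by linarith) (by linarith)
      have hint2 : 0 ≤ m0 * cc γ B (Nl + 2 * j) * ∑ i ∈ Finset.range j, cc γ B (Nl + 2 * i) :=
        mul_nonneg (mul_nonneg hm0pos.le hcnnj) hSignn
      nlinarith [h1.1]
  have hlowK : ∀ n, Nl ≤ n → ∀ ω : ℝ, |ω| ≤ B → m0 / 4 ≤ KK γ p n ω := by
    intro n hn ω hω
    obtain ⟨d, rfl⟩ := Nat.exists_eq_add_of_le hn
    rcases Nat.even_or_odd d with ⟨j, hj⟩ | ⟨j, hj⟩
    · have e : Nl + d = Nl + 2 * j := by omega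
      rw [e]
      have h1 := heven ω hω j
      have hSig : ∑ i ∈ Finset.range j, cc γ B (Nl + 2 * i) ≤ 1 / 2 :=
        le_trans (hevensum Nl j) htNl
      nlinarith [hm0pos]
    · have e : Nl + d = Nl + 2 * j + 1 := by omega
      rw [e]
      have h1 := heven ω hω j
      have h2 := abs_le.mp (hhalf (Nl + 2 * j) (by omega) ω hω)
      have hSig : ∑ i ∈ Finset.range j, cc γ B (Nl + 2 * i) ≤ 1 / 2 :=
        le_trans (hevensum Nl j) htNl
      nlinarith [hm0pos, h2.1]
  -- conclude
  refine ⟨Nl, m0 / 6, 2 * M, by linarith, ?_, ?_⟩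
  · intro n hn ω hω
    have hnN0 : N0 ≤ n := le_trans hNlN hn
    have hb := hbasic n hnN0 ω hω
    have hk := hlowK n hn ω hω
    have hku := hupper n hnN0 ω hω
    constructor
    · linarith [hb.2]
    · linarith [hb.1]
  · rw [Metric.uniformCauchySeqOn_iff]
    intro ε hε
    have hev1 : ∀ᶠ k in atTop, M * t k < ε / 6 := by
      have h1 : Tendsto (fun k => M * t k) atTop (nhds (M * 0)) := htlim.const_mul M
      rw [mul_zero] at h1
      exact h1.eventually_lt_const (by positivity)
    have hev2 : ∀ᶠ k in atTop, 6 * M * |γ (k + 1) - γ k| < ε / 6 := by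
      have h0 : Tendsto (fun k => |γ (k + 1) - γ k|) atTop (nhds 0) := by
        have := hC2.abs
        rwa [abs_zero] at this
      have h1 : Tendsto (fun k => 6 * M * |γ (k + 1) - γ k|) atTop (nhds (6 * M * 0)) :=
        h0.const_mul (6 * M)
      rw [mul_zero] at h1
      exact h1.eventually_lt_const (by positivity)
    have hev3 : ∀ᶠ k in atTop, 6 * B * M ≤ ε * γ k := by
      obtain ⟨i, hi⟩ := tendsto_atTop_atTop.mp hC1 (6 * B * M / ε)
      rw [eventually_atTop]
      refine ⟨i, fun k hk => ?_⟩
      have h1 := hi k hk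
      rw [div_le_iff₀ hε] at h1
      nlinarith
    obtain ⟨N4, hN4⟩ := eventually_atTop.mp (hev1.and (hev2.and hev3))
    set N5 := max Nl N4 with hN5def
    refine ⟨N5, ?_⟩
    have hGK : ∀ k, N5 ≤ k → ∀ ω : ℝ, |ω| ≤ B →
        |γ k * (p k ω ^ 2 + p (k + 1) ω ^ 2) - KK γ p k ω| ≤ ε / 6 := by
      intro k hk ω hω
      have hkN0 : N0 ≤ k := le_trans hNlN (le_trans (le_max_left _ _) hk)
      have h5 := (hN4 k (le_trans (le_max_right _ _) hk)).2.2
      have hb1 := (hbasic k hkN0 ω hω).1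
      have hup := hupper k hkN0 ω hω
      have hSp := (hSpos k ω).le
      have habs : γ k * (p k ω ^ 2 + p (k + 1) ω ^ 2) - KK γ p k ω
          = ω * p k ω * p (k + 1) ω := by
        unfold KK
        ring
      rw [habs]
      have h6 : |ω * p k ω * p (k + 1) ω| ≤ B * ((p k ω ^ 2 + p (k + 1) ω ^ 2) / 2) := by
        have h7 := abs_mul_le_half (p k ω) (p (k + 1) ω)
        rw [abs_mul, abs_mul] at *
        nlinarith [abs_nonneg ω, abs_nonneg (p k ω), abs_nonneg (p (k + 1) ω),
          mul_nonneg (abs_nonneg (p k ω)) (abs_nonneg (p (k + 1) ω))]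
      have h8 : B * ((p k ω ^ 2 + p (k + 1) ω ^ 2) / 2) ≤ ε / 6 := by
        have hγpos := hpos k
        have c1 : γ k * (6 * (B * ((p k ω ^ 2 + p (k + 1) ω ^ 2) / 2)))
            ≤ γ k * ε := by
          have c2 : 3 * B * (γ k * (p k ω ^ 2 + p (k + 1) ω ^ 2)) ≤ 3 * B * (2 * KK γ p k ω) :=
            mul_le_mul_of_nonneg_left hb1 (by positivity)
          have c3 : 6 * B * KK γ p k ω ≤ 6 * B * M :=
            mul_le_mul_of_nonneg_left hup (by positivity)
          nlinarith
        have c4 : 6 * (B * ((p k ω ^ 2 + p (k + 1) ω ^ 2) / 2)) ≤ ε :=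
          le_of_mul_le_mul_left c1 hγpos
        linarith
      linarith
    have hKd : ∀ n m : ℕ, N5 ≤ n → n ≤ m → ∀ ω : ℝ, |ω| ≤ B →
        |KK γ p m ω - KK γ p n ω| < ε / 3 := by
      intro n m hn hnm ω hω
      have hnN0 : N0 ≤ n := le_trans hNlN (le_trans (le_max_left _ _) hn)
      have h4 := hN4 n (le_trans (le_max_right _ _) hn)
      have hbound : |KK γ p m ω - KK γ p n ω| ≤ M * t n + 6 * M * |γ (n + 1) - γ n| := by
        obtain ⟨d, rfl⟩ := Nat.exists_eq_add_of_le hnm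
        rcases Nat.even_or_odd d with ⟨j, hj⟩ | ⟨j, hj⟩
        · have e : n + d = n + 2 * j := by omega
          rw [e]
          have h1 := hchain n hnN0 ω hω j
          have hs := hevensum n j
          have h2 : M * ∑ i ∈ Finset.range j, cc γ B (n + 2 * i) ≤ M * t n :=
            mul_le_mul_of_nonneg_left hs hMpos.le
          have h3 : 0 ≤ 6 * M * |γ (n + 1) - γ n| := by positivity
          linarith
        · have e : n + d = n + 1 + 2 * j := by omega
          rw [e]
          have h1 := hchain (n + 1) (by omega) ω hω j
          have hs : ∑ i ∈ Finset.range j, cc γ B (n + 1 + 2 * i) ≤ t (n + 1) :=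
            hevensum (n + 1) j
          have ht' : t (n + 1) ≤ t n := htstep n
          have h2a := honeS n hnN0 ω hω
          have h2b := (hbasic n hnN0 ω hω).1
          have h2c := hupper n hnN0 ω hω
          have h2d := hg1 n hnN0
          have hSp := (hSpos n ω).le
          have hKp := (hKpos n hnN0 ω hω).le
          have habs0 : 0 ≤ |γ (n + 1) - γ n| := abs_nonneg _
          have h2 : |KK γ p (n + 1) ω - KK γ p n ω| ≤ 6 * M * |γ (n + 1) - γ n| := by
            have i1 : 0 ≤ (γ n - 1) * (p n ω ^ 2 + p (n + 1) ω ^ 2) * |γ (n + 1) - γ n| :=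
              mul_nonneg (mul_nonneg (by linarith) hSp) habs0
            have i2 : 0 ≤ (M - KK γ p n ω) * |γ (n + 1) - γ n| :=
              mul_nonneg (by linarith) habs0
            nlinarith
          have h3 := abs_sub_le (KK γ p (n + 1 + 2 * j) ω) (KK γ p (n + 1) ω) (KK γ p n ω)
          have h4' : M * ∑ i ∈ Finset.range j, cc γ B (n + 1 + 2 * i) ≤ M * t n := by
            have := le_trans hs ht'
            exact mul_le_mul_of_nonneg_left this hMpos.le
          linarith
      calc |KK γ p m ω - KK γ p n ω| ≤ M * t n + 6 * M * |γ (n + 1) - γ n| := hbound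
        _ < ε / 6 + ε / 6 := by
            have := h4.1
            have := h4.2.1
            gcongr <;> assumption
        _ = ε / 3 := by ring
    intro a ha b hb ω hω
    have main : ∀ m n : ℕ, N5 ≤ n → n ≤ m →
        dist (γ m * (p m ω ^ 2 + p (m + 1) ω ^ 2)) (γ n * (p n ω ^ 2 + p (n + 1) ω ^ 2)) < ε := by
      intro m n hn hnm
      have hm5 : N5 ≤ m := le_trans hn hnm
      rw [Real.dist_eq]
      have d1 := hGK m hm5 ω hω
      have d2 := hGK n hn ω hω
      have d3 := hKd n m hn hnm ω hω
      have e1 : γ m * (p m ω ^ 2 + p (m + 1) ω ^ 2) - γ n * (p n ω ^ 2 + p (n + 1) ω ^ 2)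
          = (γ m * (p m ω ^ 2 + p (m + 1) ω ^ 2) - KK γ p m ω)
            + (KK γ p m ω - KK γ p n ω)
            + (KK γ p n ω - γ n * (p n ω ^ 2 + p (n + 1) ω ^ 2)) := by ring
      rw [e1]
      have d2' : |KK γ p n ω - γ n * (p n ω ^ 2 + p (n + 1) ω ^ 2)| ≤ ε / 6 := by
        rw [abs_sub_comm]
        exact d2
      calc |_ + _ + _|
          ≤ |(γ m * (p m ω ^ 2 + p (m + 1) ω ^ 2) - KK γ p m ω)
              + (KK γ p m ω - KK γ p n ω)|
            + |KK γ p n ω - γ n * (p n ω ^ 2 + p (n + 1) ω ^ 2)| := abs_add_le _ _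
        _ ≤ |γ m * (p m ω ^ 2 + p (m + 1) ω ^ 2) - KK γ p m ω|
            + |KK γ p m ω - KK γ p n ω|
            + |KK γ p n ω - γ n * (p n ω ^ 2 + p (n + 1) ω ^ 2)| := by
            linarith [abs_add_le (γ m * (p m ω ^ 2 + p (m + 1) ω ^ 2) - KK γ p m ω)
              (KK γ p m ω - KK γ p n ω)]
        _ < ε / 6 + ε / 3 + ε / 6 := by linarith
        _ < ε := by linarith
    rcases le_total b a with h | h
    · exact main a b hb h
    · rw [dist_comm]
      exact main b a ha h

end Stmt1Aux

/-- Theorem 1: under conditions (C1)–(C7) on the recursion coefficients `γ`,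
the limit `lim_n γ n * (p n ω ^ 2 + p (n+1) ω ^ 2)` exists for every `ω`, and
for every `B > 0` it is bounded between positive constants `m_B < M_B` for
all `|ω| ≤ B`, with uniform convergence on `{ω : |ω| ≤ B}`. -/
theorem stmt_1 (γ : ℕ → ℝ) (hpos : ∀ n, 0 < γ n)
    (p : ℕ → ℝ → ℝ)
    (hp0 : ∀ ω : ℝ, p 0 ω = 1)
    (hp1 : ∀ ω : ℝ, γ 0 * p 1 ω = ω * p 0 ω)
    (hprec : ∀ (n : ℕ) (ω : ℝ),
      γ (n + 1) * p (n + 2) ω = ω * p (n + 1) ω - γ n * p n ω)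
    -- (C1)
    (hC1 : Tendsto γ atTop atTop)
    -- (C2)
    (hC2 : Tendsto (fun n => γ (n + 1) - γ n) atTop (nhds 0))
    -- (C3)
    (hC3 : ∃ n₀ m₀ : ℕ, ∀ n ≥ n₀, ∀ m ≥ m₀, γ n < γ (n + m))
    -- (C4)
    (hC4 : ¬ Summable (fun n => 1 / γ n))
    -- (C5)
    (hC5 : ∃ κ : ℝ, 1 < κ ∧ Summable (fun n => 1 / γ n ^ κ))
    -- (C6)
    (hC6 : Summable (fun n => |γ (n + 1) - γ n| / γ n ^ 2))
    -- (C7)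
    (hC7 : Summable (fun n => |(γ (n + 2) - γ (n + 1)) - (γ (n + 1) - γ n)| / γ n)) :
    ∃ L : ℝ → ℝ,
      (∀ ω : ℝ, Tendsto (fun n => γ n * (p n ω ^ 2 + p (n + 1) ω ^ 2))
        atTop (nhds (L ω))) ∧
      ∀ B : ℝ, 0 < B →
        (∃ mB MB : ℝ, 0 < mB ∧ mB < MB ∧
          ∀ ω : ℝ, |ω| ≤ B → mB ≤ L ω ∧ L ω ≤ MB) ∧
        TendstoUniformlyOn (fun n ω => γ n * (p n ω ^ 2 + p (n + 1) ω ^ 2)) L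
          atTop {ω : ℝ | |ω| ≤ B} := by
  classical
  have hex : ∀ ω : ℝ, ∃ l : ℝ,
      Tendsto (fun n => γ n * (p n ω ^ 2 + p (n + 1) ω ^ 2)) atTop (nhds l) := by
    intro ω
    have hB : 0 < |ω| + 1 := by positivity
    obtain ⟨N, m, M, hm, hbd, hucs⟩ :=
      Stmt1Aux.key hpos hp0 hp1 hprec hC1 hC2 hC6 hC7 (|ω| + 1) hB
    have hmem : ω ∈ {x : ℝ | |x| ≤ |ω| + 1} := by
      simp only [Set.mem_setOf_eq]
      linarith
    have hcauchy : CauchySeq (fun n => γ n * (p n ω ^ 2 + p (n + 1) ω ^ 2)) := by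
      rw [Metric.cauchySeq_iff]
      intro ε hε
      obtain ⟨N', hN'⟩ := Metric.uniformCauchySeqOn_iff.mp hucs ε hε
      exact ⟨N', fun a ha b hb => hN' a ha b hb ω hmem⟩
    exact cauchySeq_tendsto_of_complete hcauchy
  choose L hL using hex
  refine ⟨L, hL, ?_⟩
  intro B hB
  obtain ⟨N, m, M, hm, hbd, hucs⟩ :=
    Stmt1Aux.key hpos hp0 hp1 hprec hC1 hC2 hC6 hC7 B hB
  constructor
  · have h0B : |(0:ℝ)| ≤ B := by simpa using hB.le
    have hMm : m ≤ M := by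
      have h := hbd N le_rfl 0 h0B
      linarith [h.1, h.2]
    refine ⟨m / 2, M + m, by linarith, by linarith, ?_⟩
    intro ω hω
    have h1 : m ≤ L ω := ge_of_tendsto (hL ω)
      (eventually_atTop.mpr ⟨N, fun n hn => (hbd n hn ω hω).1⟩)
    have h2 : L ω ≤ M := le_of_tendsto (hL ω)
      (eventually_atTop.mpr ⟨N, fun n hn => (hbd n hn ω hω).2⟩)
    constructor <;> linarith
  · exact hucs.tendstoUniformlyOn_of_tendsto fun ω _ => hL ω
end

section
/- Fix ω > 0 and assume the positive sequence (γ_n) satisfies γ_n → ∞ and Δγ_n → 0. Then the principal arguments of the complex numbers a_n satisfy arg a_n → 0 as n → ∞, and arg a_n > 0 for all sufficiently large n. -/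
open Filter

/-- The complex number `a_{n+1}` from the paper (indices shifted by one, so
`aSeq γ ω n = a_{n+1}` uses `γ (2n), γ (2n+1), γ (2n+2)`). -/
noncomputable def aSeq (γ : ℕ → ℝ) (ω : ℝ) (n : ℕ) : ℂ :=
  (((-(ω ^ 2) / (2 * γ (2 * n + 1) * γ (2 * n + 2)) +
      γ (2 * n + 1) / (2 * γ (2 * n + 2)) +
      γ (2 * n) / (2 * γ (2 * n + 1))) : ℝ) : ℂ) +
  Complex.I *
    (((ω / (2 * γ (2 * n + 1)) +
       ω * γ (2 * n) / (2 * γ (2 * n + 1) * γ (2 * n + 2))) : ℝ) : ℂ)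

/-- The complex number `b_{n+1}` from the paper (indices shifted by one, so
`bSeq γ ω n = b_{n+1}` uses `γ (2n), γ (2n+1), γ (2n+2)`). -/
noncomputable def bSeq (γ : ℕ → ℝ) (ω : ℝ) (n : ℕ) : ℂ :=
  (((ω ^ 2 / (2 * γ (2 * n + 1) * γ (2 * n + 2)) -
      γ (2 * n + 1) / (2 * γ (2 * n + 2)) +
      γ (2 * n) / (2 * γ (2 * n + 1))) : ℝ) : ℂ) +
  Complex.I *
    (((-ω / (2 * γ (2 * n + 1)) +
       ω * γ (2 * n) / (2 * γ (2 * n + 1) * γ (2 * n + 2))) : ℝ) : ℂ)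

/-- Corollary: if `γ_n → ∞` and `Δγ_n → 0` then `arg a_n → 0`, and
`arg a_n > 0` for all sufficiently large `n`. -/
theorem stmt_5 (γ : ℕ → ℝ) (hpos : ∀ n, 0 < γ n) (ω : ℝ) (hω : 0 < ω)
    (hC1 : Tendsto γ atTop atTop)
    (hC2 : Tendsto (fun n => γ (n + 1) - γ n) atTop (nhds 0)) :
    Tendsto (fun n => (aSeq γ ω n).arg) atTop (nhds 0) ∧
    (∀ᶠ n in atTop, 0 < (aSeq γ ω n).arg) := by
  have hne : ∀ n, γ n ≠ 0 := fun n => (hpos n).ne'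
  have hinv : Tendsto (fun n => (γ n)⁻¹) atTop (nhds 0) :=
    tendsto_inv_atTop_zero.comp hC1
  have hratio : Tendsto (fun n => γ (n + 1) / γ n) atTop (nhds 1) := by
    have h : Tendsto (fun n => 1 + (γ (n + 1) - γ n) * (γ n)⁻¹) atTop (nhds (1 + 0 * 0)) :=
      tendsto_const_nhds.add (hC2.mul hinv)
    rw [mul_zero, add_zero] at h
    refine h.congr fun n => ?_
    have := hne n
    field_simp
    ring
  have h2n : Tendsto (fun n : ℕ => 2 * n) atTop atTop :=
    tendsto_atTop_mono (fun n => by simp only [id_eq]; omega) tendsto_id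
  have h2n1 : Tendsto (fun n : ℕ => 2 * n + 1) atTop atTop :=
    tendsto_atTop_mono (fun n => by simp only [id_eq]; omega) tendsto_id
  have h2n2 : Tendsto (fun n : ℕ => 2 * n + 2) atTop atTop :=
    tendsto_atTop_mono (fun n => by simp only [id_eq]; omega) tendsto_id
  have hs : Tendsto (fun n => γ (2 * n + 1) / γ (2 * n)) atTop (nhds 1) := hratio.comp h2n
  have hr : Tendsto (fun n => γ (2 * n + 2) / γ (2 * n + 1)) atTop (nhds 1) := by
    have := hratio.comp h2n1
    exact this
  have hu : Tendsto (fun n => (γ (2 * n + 1))⁻¹) atTop (nhds 0) := hinv.comp h2n1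
  have hv : Tendsto (fun n => (γ (2 * n + 2))⁻¹) atTop (nhds 0) := hinv.comp h2n2
  have hsi : Tendsto (fun n => (γ (2 * n + 1) / γ (2 * n))⁻¹) atTop (nhds 1) := by
    simpa using hs.inv₀ one_ne_zero
  have hri : Tendsto (fun n => (γ (2 * n + 2) / γ (2 * n + 1))⁻¹) atTop (nhds 1) := by
    simpa using hr.inv₀ one_ne_zero
  -- real part tends to 1
  have hRe : Tendsto (fun n => -(ω ^ 2) / (2 * γ (2 * n + 1) * γ (2 * n + 2)) +
      γ (2 * n + 1) / (2 * γ (2 * n + 2)) +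
      γ (2 * n) / (2 * γ (2 * n + 1))) atTop (nhds 1) := by
    have h : Tendsto (fun n => (-(ω ^ 2) / 2) * (γ (2 * n + 1))⁻¹ * (γ (2 * n + 2))⁻¹ +
        (1 / 2) * (γ (2 * n + 2) / γ (2 * n + 1))⁻¹ +
        (1 / 2) * (γ (2 * n + 1) / γ (2 * n))⁻¹) atTop
        (nhds ((-(ω ^ 2) / 2) * 0 * 0 + (1 / 2) * 1 + (1 / 2) * 1)) :=
      (((tendsto_const_nhds.mul hu).mul hv).add (tendsto_const_nhds.mul hri)).add
        (tendsto_const_nhds.mul hsi)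
    norm_num at h
    refine h.congr fun n => ?_
    have h1 := hne (2 * n)
    have h2 := hne (2 * n + 1)
    have h3 := hne (2 * n + 2)
    field_simp
  -- imaginary part tends to 0
  have hIm : Tendsto (fun n => ω / (2 * γ (2 * n + 1)) +
      ω * γ (2 * n) / (2 * γ (2 * n + 1) * γ (2 * n + 2))) atTop (nhds 0) := by
    have h : Tendsto (fun n => (ω / 2) * (γ (2 * n + 1))⁻¹ +
        (ω / 2) * (γ (2 * n + 1) / γ (2 * n))⁻¹ * (γ (2 * n + 2))⁻¹) atTop
        (nhds ((ω / 2) * 0 + (ω / 2) * 1 * 0)) :=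
      (tendsto_const_nhds.mul hu).add ((tendsto_const_nhds.mul hsi).mul hv)
    norm_num at h
    refine h.congr fun n => ?_
    have h1 := hne (2 * n)
    have h2 := hne (2 * n + 1)
    have h3 := hne (2 * n + 2)
    field_simp
  have ha : Tendsto (aSeq γ ω) atTop (nhds 1) := by
    have hRe' := (Complex.continuous_ofReal.tendsto (1 : ℝ)).comp hRe
    have hIm' := (Complex.continuous_ofReal.tendsto (0 : ℝ)).comp hIm
    have key := hRe'.add (tendsto_const_nhds (x := Complex.I)|>.mul hIm')
    have key2 : Tendsto (aSeq γ ω) atTop (nhds ((1:ℝ) + Complex.I * (0:ℝ))) :=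
      key.congr fun n => by simp [aSeq, Function.comp]
    simpa using key2
  constructor
  · have hcont : ContinuousAt Complex.arg 1 :=
      Complex.continuousAt_arg (by simp [Complex.mem_slitPlane_iff])
    have := hcont.tendsto.comp ha
    simpa [Complex.arg_one, Function.comp_def] using this
  · refine Eventually.of_forall fun n => ?_
    have him : 0 < (aSeq γ ω n).im := by
      simp only [aSeq, Complex.add_im, Complex.ofReal_im, Complex.mul_im,
        Complex.I_re, Complex.I_im, Complex.ofReal_re, zero_mul, one_mul, zero_add]
      have h1 := hpos (2 * n)
      have h2 := hpos (2 * n + 1)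
      have h3 := hpos (2 * n + 2)
      positivity
    have hle : 0 ≤ (aSeq γ ω n).arg := Complex.arg_nonneg_iff.mpr him.le
    rcases hle.lt_or_eq with h | h
    · exact h
    · exfalso
      have := (Complex.arg_eq_zero_iff).mp h.symm
      exact him.ne' this.2
end

section
/- Fix ω > 0 and assume the positive sequence (γ_n) satisfies γ_n → ∞ and Δγ_n → 0. Then |b_n| → 0 and |a_n| → 1 as n → ∞. -/
open Filter

/-- Corollary: if `γ_n → ∞` and `Δγ_n → 0` then `|b_n| → 0` and `|a_n| → 1`. -/
theorem stmt_6 (γ : ℕ → ℝ) (hpos : ∀ n, 0 < γ n) (ω : ℝ) (hω : 0 < ω)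
    (hC1 : Tendsto γ atTop atTop)
    (hC2 : Tendsto (fun n => γ (n + 1) - γ n) atTop (nhds 0)) :
    Tendsto (fun n => ‖bSeq γ ω n‖) atTop (nhds 0) ∧
    Tendsto (fun n => ‖aSeq γ ω n‖) atTop (nhds 1) := by
  have hne : ∀ n, γ n ≠ 0 := fun n => (hpos n).ne'
  -- index maps
  have h2n : Tendsto (fun n : ℕ => 2 * n) atTop atTop :=
    tendsto_atTop_atTop_of_monotone (fun a b h => by omega) (fun b => ⟨b, by omega⟩)
  have h2n1 : Tendsto (fun n : ℕ => 2 * n + 1) atTop atTop :=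
    tendsto_atTop_atTop_of_monotone (fun a b h => by omega) (fun b => ⟨b, by omega⟩)
  have h2n2 : Tendsto (fun n : ℕ => 2 * n + 2) atTop atTop :=
    tendsto_atTop_atTop_of_monotone (fun a b h => by omega) (fun b => ⟨b, by omega⟩)
  have hshift1 : Tendsto (fun n => γ (n + 1)) atTop atTop :=
    hC1.comp (tendsto_atTop_atTop_of_monotone (fun a b h => by omega) (fun b => ⟨b, by omega⟩))
  -- ratio lemma
  have hratio : Tendsto (fun n => γ n / γ (n + 1)) atTop (nhds 1) := by
    have h0 : Tendsto (fun n => (γ (n + 1) - γ n) / γ (n + 1)) atTop (nhds 0) :=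
      hC2.div_atTop hshift1
    have heq : (fun n => γ n / γ (n + 1)) =
        fun n => 1 - (γ (n + 1) - γ n) / γ (n + 1) := by
      funext n; field_simp [hne (n+1)]; ring
    rw [heq]
    simpa using (tendsto_const_nhds (x := (1 : ℝ)) (f := atTop)).sub h0
  -- limits of the building blocks
  have vtop : Tendsto (fun n => γ (2 * n + 1)) atTop atTop := hC1.comp h2n1
  have wtop : Tendsto (fun n => γ (2 * n + 2)) atTop atTop := hC1.comp h2n2
  have hA : Tendsto (fun n => γ (2 * n) / γ (2 * n + 1)) atTop (nhds 1) := hratio.comp h2n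
  have hB : Tendsto (fun n => γ (2 * n + 1) / γ (2 * n + 2)) atTop (nhds 1) := hratio.comp h2n1
  have h2vw : Tendsto (fun n => 2 * γ (2 * n + 1) * γ (2 * n + 2)) atTop atTop := by
    have := (vtop.const_mul_atTop (by norm_num : (0:ℝ) < 2)).atTop_mul_atTop₀ wtop
    simpa [mul_assoc] using this
  have h2v : Tendsto (fun n => 2 * γ (2 * n + 1)) atTop atTop :=
    vtop.const_mul_atTop (by norm_num : (0:ℝ) < 2)
  have hE1 : Tendsto (fun n => ω ^ 2 / (2 * γ (2 * n + 1) * γ (2 * n + 2))) atTop (nhds 0) :=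
    tendsto_const_nhds.div_atTop h2vw
  have hE1' : Tendsto (fun n => -(ω ^ 2) / (2 * γ (2 * n + 1) * γ (2 * n + 2))) atTop (nhds 0) :=
    tendsto_const_nhds.div_atTop h2vw
  have hB2 : Tendsto (fun n => γ (2 * n + 1) / (2 * γ (2 * n + 2))) atTop (nhds (1 / 2)) := by
    have := hB.div_const 2
    have heq : (fun n => γ (2 * n + 1) / (2 * γ (2 * n + 2))) =
        fun n => γ (2 * n + 1) / γ (2 * n + 2) / 2 := by
      funext n; ring
    rw [heq]; exact this
  have hA2 : Tendsto (fun n => γ (2 * n) / (2 * γ (2 * n + 1))) atTop (nhds (1 / 2)) := by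
    have := hA.div_const 2
    have heq : (fun n => γ (2 * n) / (2 * γ (2 * n + 1))) =
        fun n => γ (2 * n) / γ (2 * n + 1) / 2 := by
      funext n; ring
    rw [heq]; exact this
  have hI1 : Tendsto (fun n => ω / (2 * γ (2 * n + 1))) atTop (nhds 0) :=
    tendsto_const_nhds.div_atTop h2v
  have hI1' : Tendsto (fun n => -ω / (2 * γ (2 * n + 1))) atTop (nhds 0) :=
    tendsto_const_nhds.div_atTop h2v
  have hI2 : Tendsto (fun n => ω * γ (2 * n) / (2 * γ (2 * n + 1) * γ (2 * n + 2)))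
      atTop (nhds 0) := by
    have h := (hA.const_mul (ω / 2)).mul (tendsto_inv_atTop_zero.comp wtop)
    have heq : (fun n => ω * γ (2 * n) / (2 * γ (2 * n + 1) * γ (2 * n + 2))) =
        fun n => ω / 2 * (γ (2 * n) / γ (2 * n + 1)) * (γ (2 * n + 2))⁻¹ := by
      funext n
      field_simp
    rw [heq]
    simpa using h
  -- real and imaginary parts
  have hbre : Tendsto (fun n => ω ^ 2 / (2 * γ (2 * n + 1) * γ (2 * n + 2)) -
      γ (2 * n + 1) / (2 * γ (2 * n + 2)) + γ (2 * n) / (2 * γ (2 * n + 1)))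
      atTop (nhds 0) := by
    have := (hE1.sub hB2).add hA2
    norm_num at this
    exact this
  have hbim : Tendsto (fun n => -ω / (2 * γ (2 * n + 1)) +
      ω * γ (2 * n) / (2 * γ (2 * n + 1) * γ (2 * n + 2))) atTop (nhds 0) := by
    simpa using hI1'.add hI2
  have hare : Tendsto (fun n => -(ω ^ 2) / (2 * γ (2 * n + 1) * γ (2 * n + 2)) +
      γ (2 * n + 1) / (2 * γ (2 * n + 2)) + γ (2 * n) / (2 * γ (2 * n + 1)))
      atTop (nhds 1) := by
    have := (hE1'.add hB2).add hA2
    norm_num at this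
    exact this
  have haim : Tendsto (fun n => ω / (2 * γ (2 * n + 1)) +
      ω * γ (2 * n) / (2 * γ (2 * n + 1) * γ (2 * n + 2))) atTop (nhds 0) := by
    simpa using hI1.add hI2
  -- complex limits
  have hofReal : Continuous (fun x : ℝ => (x : ℂ)) := Complex.continuous_ofReal
  have hb : Tendsto (fun n => bSeq γ ω n) atTop (nhds 0) := by
    have h1 := (hofReal.tendsto (0 : ℝ)).comp hbre
    have h2 := (hofReal.tendsto (0 : ℝ)).comp hbim
    have := h1.add ((tendsto_const_nhds (x := Complex.I) (f := atTop)).mul h2)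
    simpa [bSeq, Function.comp] using this
  have ha : Tendsto (fun n => aSeq γ ω n) atTop (nhds 1) := by
    have h1 := (hofReal.tendsto (1 : ℝ)).comp hare
    have h2 := (hofReal.tendsto (0 : ℝ)).comp haim
    have := h1.add ((tendsto_const_nhds (x := Complex.I) (f := atTop)).mul h2)
    simpa [aSeq, Function.comp] using this
  constructor
  · have := (continuous_norm.tendsto 0).comp hb
    simpa [Function.comp_def] using this
  · have := (continuous_norm.tendsto 1).comp ha
    simpa [Function.comp_def] using this
end

section
/- Fix ω > 0 and assume the positive sequence (γ_n) satisfies γ_n → ∞ and Δγ_n → 0. Then Im(a_n) > |b_n| for all sufficiently large n. -/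
open Filter

/-- Corollary: if `γ_n → ∞` and `Δγ_n → 0` then `Im a_n > |b_n|` for all
sufficiently large `n`. -/
theorem stmt_7 (γ : ℕ → ℝ) (hpos : ∀ n, 0 < γ n) (ω : ℝ) (hω : 0 < ω)
    (hC1 : Tendsto γ atTop atTop)
    (hC2 : Tendsto (fun n => γ (n + 1) - γ n) atTop (nhds 0)) :
    ∀ᶠ n in atTop, ‖bSeq γ ω n‖ < (aSeq γ ω n).im := by
  have hne : ∀ n, γ n ≠ 0 := fun n => (hpos n).ne'
  have L1 : Tendsto (fun n => (γ n)⁻¹) atTop (nhds 0) := hC1.inv_tendsto_atTop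
  have L2 : Tendsto (fun n => γ (n + 1) / γ n) atTop (nhds 1) := by
    have h : Tendsto (fun n => (γ (n + 1) - γ n) * (γ n)⁻¹ + 1) atTop
        (nhds (0 * 0 + 1)) := (hC2.mul L1).add tendsto_const_nhds
    have heq : (fun n => (γ (n + 1) - γ n) * (γ n)⁻¹ + 1)
        = fun n => γ (n + 1) / γ n := by
      funext n
      field_simp [hne n]
      ring
    rw [heq] at h
    simpa using h
  have L3 : Tendsto (fun n => γ n / γ (n + 1)) atTop (nhds 1) := by
    have h := L2.inv₀ one_ne_zero
    simp only [inv_div] at h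
    simpa using h
  have h2n : Tendsto (fun n => 2 * n) atTop atTop :=
    tendsto_atTop_mono (fun n => by simp only [id_eq]; omega) tendsto_id
  have h2n1 : Tendsto (fun n => 2 * n + 1) atTop atTop :=
    tendsto_atTop_mono (fun n => by simp only [id_eq]; omega) tendsto_id
  have h2n2 : Tendsto (fun n => 2 * n + 2) atTop atTop :=
    tendsto_atTop_mono (fun n => by simp only [id_eq]; omega) tendsto_id
  -- subsequence limits
  have dA : Tendsto (fun n => γ (2 * n + 1) - γ (2 * n)) atTop (nhds 0) := by
    have := hC2.comp h2n
    simpa [Function.comp_def] using this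
  have dB : Tendsto (fun n => γ (2 * n + 2) - γ (2 * n + 1)) atTop (nhds 0) := by
    have := hC2.comp h2n1
    simpa [Function.comp_def, show ∀ n : ℕ, 2 * n + 1 + 1 = 2 * n + 2 from fun n => by omega]
      using this
  have rAB : Tendsto (fun n => γ (2 * n) / γ (2 * n + 1)) atTop (nhds 1) := by
    have := L3.comp h2n
    simpa [Function.comp_def] using this
  have rBC : Tendsto (fun n => γ (2 * n + 1) / γ (2 * n + 2)) atTop (nhds 1) := by
    have := L3.comp h2n1
    simpa [Function.comp_def, show ∀ n : ℕ, 2 * n + 1 + 1 = 2 * n + 2 from fun n => by omega]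
      using this
  have invC : Tendsto (fun n => (γ (2 * n + 2))⁻¹) atTop (nhds 0) := by
    have := L1.comp h2n2
    simpa [Function.comp_def] using this
  have rAC : Tendsto (fun n => γ (2 * n) / γ (2 * n + 2)) atTop (nhds 1) := by
    have h := rAB.mul rBC
    have heq : (fun n => γ (2 * n) / γ (2 * n + 1) * (γ (2 * n + 1) / γ (2 * n + 2)))
        = fun n => γ (2 * n) / γ (2 * n + 2) := by
      funext n
      rw [div_mul_div_comm, mul_comm (γ (2 * n)) (γ (2 * n + 1)),
        mul_div_mul_left _ _ (hne (2 * n + 1))]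
    rw [heq] at h
    simpa using h
  -- the imaginary part of a, scaled
  have Ia : Tendsto (fun n => 2 * γ (2 * n + 1) * (aSeq γ ω n).im) atTop
      (nhds (2 * ω)) := by
    have heq : (fun n => 2 * γ (2 * n + 1) * (aSeq γ ω n).im)
        = fun n => ω + ω * (γ (2 * n) / γ (2 * n + 2)) := by
      funext n
      simp only [aSeq, Complex.add_im, Complex.ofReal_im, Complex.mul_im,
        Complex.I_re, Complex.I_im, Complex.ofReal_re, zero_mul, one_mul,
        zero_add, add_zero]
      have hB := hne (2 * n + 1)
      have hC := hne (2 * n + 2)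
      set A := γ (2 * n)
      set B := γ (2 * n + 1)
      set C := γ (2 * n + 2)
      field_simp
    rw [heq]
    have h : Tendsto (fun n => ω + ω * (γ (2 * n) / γ (2 * n + 2))) atTop
        (nhds (ω + ω * 1)) := tendsto_const_nhds.add (rAC.const_mul ω)
    simpa [two_mul] using h
  -- the scaled b tends to 0 in ℂ
  have hX : Tendsto (fun n => ω ^ 2 * (γ (2 * n + 2))⁻¹
      + (γ (2 * n) / γ (2 * n + 2)) * (γ (2 * n + 2) - γ (2 * n + 1))
      - (γ (2 * n + 1) / γ (2 * n + 2)) * (γ (2 * n + 1) - γ (2 * n)))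
      atTop (nhds 0) := by
    have h := ((invC.const_mul (ω ^ 2)).add (rAC.mul dB)).sub (rBC.mul dA)
    simpa using h
  have hY : Tendsto (fun n => -ω + ω * (γ (2 * n) / γ (2 * n + 2))) atTop
      (nhds 0) := by
    have h : Tendsto (fun n => -ω + ω * (γ (2 * n) / γ (2 * n + 2))) atTop
        (nhds (-ω + ω * 1)) := tendsto_const_nhds.add (rAC.const_mul ω)
    simpa using h
  have hcb : Tendsto (fun n => ((2 * γ (2 * n + 1) : ℝ) : ℂ) * bSeq γ ω n) atTop
      (nhds 0) := by
    have heq : (fun n => ((2 * γ (2 * n + 1) : ℝ) : ℂ) * bSeq γ ω n)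
        = fun n => ((ω ^ 2 * (γ (2 * n + 2))⁻¹
          + (γ (2 * n) / γ (2 * n + 2)) * (γ (2 * n + 2) - γ (2 * n + 1))
          - (γ (2 * n + 1) / γ (2 * n + 2)) * (γ (2 * n + 1) - γ (2 * n)) : ℝ) : ℂ)
          + Complex.I * ((-ω + ω * (γ (2 * n) / γ (2 * n + 2)) : ℝ) : ℂ) := by
      funext n
      have hB := hne (2 * n + 1)
      have hC := hne (2 * n + 2)
      simp only [bSeq, Complex.ext_iff, Complex.add_re, Complex.add_im,
        Complex.mul_re, Complex.mul_im, Complex.ofReal_re, Complex.ofReal_im,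
        Complex.I_re, Complex.I_im, zero_mul, one_mul, mul_zero, zero_add,
        add_zero, sub_zero, zero_sub]
      set A := γ (2 * n)
      set B := γ (2 * n + 1)
      set C := γ (2 * n + 2)
      constructor
      · field_simp
        ring
      · field_simp
    rw [heq]
    have h1 := (Complex.continuous_ofReal.tendsto 0).comp hX
    have h2 := (Complex.continuous_ofReal.tendsto 0).comp hY
    have h := h1.add (h2.const_mul Complex.I)
    simpa [Function.comp] using h
  have habs : Tendsto (fun n => ‖((2 * γ (2 * n + 1) : ℝ) : ℂ)
      * bSeq γ ω n‖) atTop (nhds 0) := by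
    have := (continuous_norm.tendsto 0).comp hcb
    simpa only [Function.comp_def, norm_zero] using this
  have hF : Tendsto (fun n => 2 * γ (2 * n + 1) * (aSeq γ ω n).im
      - ‖((2 * γ (2 * n + 1) : ℝ) : ℂ) * bSeq γ ω n‖) atTop
      (nhds (2 * ω)) := by
    have h := Ia.sub habs
    simpa using h
  have hev : ∀ᶠ n in atTop, 0 < 2 * γ (2 * n + 1) * (aSeq γ ω n).im
      - ‖((2 * γ (2 * n + 1) : ℝ) : ℂ) * bSeq γ ω n‖ :=
    hF.eventually (eventually_gt_nhds (by linarith))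
  filter_upwards [hev] with n hn
  have hB : (0 : ℝ) < 2 * γ (2 * n + 1) := by have := hpos (2 * n + 1); linarith
  have habs' : ‖((2 * γ (2 * n + 1) : ℝ) : ℂ) * bSeq γ ω n‖
      = 2 * γ (2 * n + 1) * ‖bSeq γ ω n‖ := by
    rw [norm_mul, Complex.norm_real, Real.norm_of_nonneg hB.le]
  rw [habs'] at hn
  have : 2 * γ (2 * n + 1) * ‖bSeq γ ω n‖
      < 2 * γ (2 * n + 1) * (aSeq γ ω n).im := by linarith
  exact lt_of_mul_lt_mul_left (by linarith) hB.le
end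

section
/- Define E_n(ω) = (−1)^n (p_{2n}(ω) + i p_{2n+1}(ω)) for n ≥ 0. Then for every ω ∈ ℝ and every n ≥ 1, E_n(ω) = a_n E_{n−1}(ω) + b_n · conj(E_{n−1}(ω)), where conj denotes complex conjugation. -/
open Filter

/-- With `E_n(ω) = (−1)^n (p_{2n}(ω) + i p_{2n+1}(ω))`, the two-term recurrence
`E_n = a_n E_{n−1} + b_n conj(E_{n−1})` holds for all `n ≥ 1` (stated with the
index shift `n ↦ n+1`, where `aSeq γ ω n = a_{n+1}` and `bSeq γ ω n = b_{n+1}`). -/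
theorem stmt_8 (γ : ℕ → ℝ) (hpos : ∀ n, 0 < γ n)
    (p : ℕ → ℝ → ℝ)
    (hp0 : ∀ ω : ℝ, p 0 ω = 1)
    (hp1 : ∀ ω : ℝ, γ 0 * p 1 ω = ω * p 0 ω)
    (hprec : ∀ (n : ℕ) (ω : ℝ),
      γ (n + 1) * p (n + 2) ω = ω * p (n + 1) ω - γ n * p n ω)
    (E : ℕ → ℝ → ℂ)
    (hE : ∀ (n : ℕ) (ω : ℝ),
      E n ω = (-1 : ℂ) ^ n * ((p (2 * n) ω : ℂ) + Complex.I * (p (2 * n + 1) ω : ℂ))) :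
    ∀ (ω : ℝ) (n : ℕ),
      E (n + 1) ω =
        aSeq γ ω n * E n ω + bSeq γ ω n * (starRingEnd ℂ) (E n ω) := by
  intro ω n
  have g1 : γ (2 * n + 1) ≠ 0 := (hpos _).ne'
  have g2 : γ (2 * n + 2) ≠ 0 := (hpos _).ne'
  have i1 : 2 * (n + 1) = 2 * n + 1 + 1 := by ring
  have h1 : γ (2 * n + 1) * p (2 * n + 1 + 1) ω
      = ω * p (2 * n + 1) ω - γ (2 * n) * p (2 * n) ω := hprec (2 * n) ω
  have h2 : γ (2 * n + 2) * p (2 * n + 1 + 1 + 1) ω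
      = ω * p (2 * n + 1 + 1) ω - γ (2 * n + 1) * p (2 * n + 1) ω := hprec (2 * n + 1) ω
  have eC : p (2 * n + 1 + 1) ω
      = (ω * p (2 * n + 1) ω - γ (2 * n) * p (2 * n) ω) / γ (2 * n + 1) := by
    field_simp
    linarith [h1]
  have eD : p (2 * n + 1 + 1 + 1) ω
      = (ω * p (2 * n + 1 + 1) ω - γ (2 * n + 1) * p (2 * n + 1) ω) / γ (2 * n + 2) := by
    field_simp
    linarith [h2]
  have hconj : (starRingEnd ℂ) ((-1 : ℂ) ^ n *
        ((p (2 * n) ω : ℂ) + Complex.I * (p (2 * n + 1) ω : ℂ)))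
      = (-1 : ℂ) ^ n * ((p (2 * n) ω : ℂ) - Complex.I * (p (2 * n + 1) ω : ℂ)) := by
    simp [map_mul, map_pow, map_add, Complex.conj_I]
    ring
  have key : (-1 : ℂ) * ((p (2 * n + 1 + 1) ω : ℂ) + Complex.I * (p (2 * n + 1 + 1 + 1) ω : ℂ))
      = aSeq γ ω n * ((p (2 * n) ω : ℂ) + Complex.I * (p (2 * n + 1) ω : ℂ))
        + bSeq γ ω n * ((p (2 * n) ω : ℂ) - Complex.I * (p (2 * n + 1) ω : ℂ)) := by
    rw [eD, eC, aSeq, bSeq]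
    apply Complex.ext <;>
      simp only [Complex.add_re, Complex.add_im, Complex.sub_re, Complex.sub_im,
        Complex.mul_re, Complex.mul_im, Complex.neg_re, Complex.neg_im,
        Complex.one_re, Complex.one_im, Complex.I_re, Complex.I_im,
        Complex.ofReal_re, Complex.ofReal_im] <;>
      field_simp <;>
      ring
  rw [hE (n + 1) ω, hE n ω, i1, hconj]
  linear_combination ((-1 : ℂ) ^ n) * key
end

section
/- Fix ω > 0 and assume the positive sequence (γ_n) satisfies γ_n → ∞ and Δγ_n → 0. Then the following asymptotic equalities hold: Re(a_n) = 1 − ω²/(2γ_{2n−1}²) − (Δγ_{2n−1} + Δγ_{2n−2})/(2γ_{2n−1}) + O(|Δγ_{2n−1}|/γ_{2n−1}²); Im(a_n) = (ω/γ_{2n−1})·(1 − (Δγ_{2n−1} + Δγ_{2n−2})/(2γ_{2n−1})) + O(|Δγ_{2n−1}|/γ_{2n−1}³); Re(b_n) = ω²/(2γ_{2n−1}²) + Δ²γ_{2n−2}/(2γ_{2n−1}) + O(|Δγ_{2n−1}|/γ_{2n−1}²); Im(b_n) = −ω(Δγ_{2n−1} + Δγ_{2n−2})/(2γ_{2n−1}²)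 + O(|Δγ_{2n−1}|/γ_{2n−1}³). -/
open Filter

lemma bnd1 (ω x y δ : ℝ) (hx : 2 ≤ x) (hxy : x ≤ 2*y) (hδ : |δ| ≤ 1) :
    |ω^2*δ/(2*x^2*y) + δ^2/(2*x*y)| ≤ (ω^2/2 + 1) * (|δ|/x^2) := by
  have hx0 : (0:ℝ) < x := by linarith
  have hy0 : (0:ℝ) < y := by linarith
  have hy1 : (1:ℝ) ≤ y := by linarith
  have hd0 : 0 ≤ |δ| := abs_nonneg δ
  have e1 : |ω^2*δ/(2*x^2*y)| = ω^2*|δ|/(2*x^2*y) := by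
    rw [abs_div, abs_mul, abs_of_nonneg (sq_nonneg ω),
      abs_of_pos (by positivity : (0:ℝ) < 2*x^2*y)]
  have e2 : |δ^2/(2*x*y)| = |δ|^2/(2*x*y) := by
    rw [abs_div, abs_pow, abs_of_pos (by positivity : (0:ℝ) < 2*x*y)]
  have h3 : (ω^2/2 + 1) * (|δ|/x^2) = ((ω^2+2)*|δ|)/(2*x^2) := by field_simp
  calc |ω^2*δ/(2*x^2*y) + δ^2/(2*x*y)| ≤ |ω^2*δ/(2*x^2*y)| + |δ^2/(2*x*y)| := abs_add_le _ _
    _ = ω^2*|δ|/(2*x^2*y) + |δ|^2/(2*x*y) := by rw [e1, e2]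
    _ = (ω^2*|δ| + |δ|^2*x)/(2*x^2*y) := by field_simp
    _ ≤ ((ω^2+2)*|δ|)/(2*x^2) := by
        rw [div_le_div_iff₀ (by positivity) (by positivity)]
        nlinarith [mul_nonneg (mul_nonneg (sq_nonneg ω) hd0)
            (mul_nonneg (sq_nonneg x) (by linarith : (0:ℝ) ≤ y - 1)),
          mul_le_mul_of_nonneg_left hxy (mul_nonneg hd0 (sq_nonneg x)),
          mul_le_mul_of_nonneg_right hδ (mul_nonneg hd0 (pow_pos hx0 3).le)]
    _ = (ω^2/2 + 1) * (|δ|/x^2) := h3.symm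

lemma bnd2 (ω x y δ s : ℝ) (hω : 0 ≤ ω) (hx : 2 ≤ x) (hxy : x ≤ 2*y) (hs : |s| ≤ 2) :
    |ω*δ*s/(2*x^2*y)| ≤ (2*ω) * (|δ|/x^3) := by
  have hx0 : (0:ℝ) < x := by linarith
  have hy0 : (0:ℝ) < y := by linarith
  have hd0 : 0 ≤ |δ| := abs_nonneg δ
  have e1 : |ω*δ*s/(2*x^2*y)| = ω * |δ| * |s| / (2*x^2*y) := by
    rw [abs_div, abs_mul, abs_mul, abs_of_nonneg hω,
      abs_of_pos (by positivity : (0:ℝ) < 2*x^2*y)]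
  rw [e1]
  have h3 : (2*ω) * (|δ|/x^3) = (2*ω*|δ|)/x^3 := by ring
  rw [h3, div_le_div_iff₀ (by positivity) (by positivity)]
  nlinarith [mul_le_mul_of_nonneg_left hs (mul_nonneg (mul_nonneg hω hd0) (pow_pos hx0 3).le),
    mul_le_mul_of_nonneg_left hxy (mul_nonneg (mul_nonneg hω hd0) (sq_nonneg x))]

/-- Lemma 8 (asymptotic representation of `a_n` and `b_n`). -/
theorem stmt_9 (γ : ℕ → ℝ) (hpos : ∀ n, 0 < γ n) (ω : ℝ) (hω : 0 < ω)
    (hC1 : Tendsto γ atTop atTop)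
    (hC2 : Tendsto (fun n => γ (n + 1) - γ n) atTop (nhds 0)) :
    -- Re(a_n)
    (∃ M : ℝ, 0 < M ∧ ∀ᶠ n : ℕ in atTop,
      |(aSeq γ ω n).re -
          (1 - ω ^ 2 / (2 * γ (2 * n + 1) ^ 2) -
            ((γ (2 * n + 2) - γ (2 * n + 1)) + (γ (2 * n + 1) - γ (2 * n))) /
              (2 * γ (2 * n + 1)))| ≤
        M * (|γ (2 * n + 2) - γ (2 * n + 1)| / γ (2 * n + 1) ^ 2)) ∧
    -- Im(a_n)
    (∃ M : ℝ, 0 < M ∧ ∀ᶠ n : ℕ in atTop,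
      |(aSeq γ ω n).im -
          (ω / γ (2 * n + 1)) *
            (1 - ((γ (2 * n + 2) - γ (2 * n + 1)) + (γ (2 * n + 1) - γ (2 * n))) /
              (2 * γ (2 * n + 1)))| ≤
        M * (|γ (2 * n + 2) - γ (2 * n + 1)| / γ (2 * n + 1) ^ 3)) ∧
    -- Re(b_n)
    (∃ M : ℝ, 0 < M ∧ ∀ᶠ n : ℕ in atTop,
      |(bSeq γ ω n).re -
          (ω ^ 2 / (2 * γ (2 * n + 1) ^ 2) +
            ((γ (2 * n + 2) - γ (2 * n + 1)) - (γ (2 * n + 1) - γ (2 * n))) /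
              (2 * γ (2 * n + 1)))| ≤
        M * (|γ (2 * n + 2) - γ (2 * n + 1)| / γ (2 * n + 1) ^ 2)) ∧
    -- Im(b_n)
    (∃ M : ℝ, 0 < M ∧ ∀ᶠ n : ℕ in atTop,
      |(bSeq γ ω n).im -
          (-(ω * ((γ (2 * n + 2) - γ (2 * n + 1)) + (γ (2 * n + 1) - γ (2 * n)))) /
            (2 * γ (2 * n + 1) ^ 2))| ≤
        M * (|γ (2 * n + 2) - γ (2 * n + 1)| / γ (2 * n + 1) ^ 3)) := by
  have ht : Tendsto (fun n : ℕ => 2*n+1) atTop atTop :=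
    tendsto_atTop_atTop.mpr fun b => ⟨b, fun a ha => by omega⟩
  have ht' : Tendsto (fun n : ℕ => 2*n) atTop atTop :=
    tendsto_atTop_atTop.mpr fun b => ⟨b, fun a ha => by omega⟩
  have hxbig : ∀ᶠ n : ℕ in atTop, 2 ≤ γ (2*n+1) := (hC1.comp ht).eventually_ge_atTop 2
  have hδ1 : ∀ᶠ n : ℕ in atTop, |γ (2*n+2) - γ (2*n+1)| ≤ 1 := by
    have h := (hC2.comp ht).eventually (Metric.ball_mem_nhds (0:ℝ) one_pos)
    filter_upwards [h] with n hn
    simp only [Function.comp, Metric.mem_ball, Real.dist_eq, sub_zero] at hn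
    exact le_of_lt hn
  have hε1 : ∀ᶠ n : ℕ in atTop, |γ (2*n+1) - γ (2*n)| ≤ 1 := by
    have h := (hC2.comp ht').eventually (Metric.ball_mem_nhds (0:ℝ) one_pos)
    filter_upwards [h] with n hn
    simp only [Function.comp, Metric.mem_ball, Real.dist_eq, sub_zero] at hn
    exact le_of_lt hn
  have hfacts : ∀ᶠ n : ℕ in atTop, 2 ≤ γ (2*n+1) ∧
      γ (2*n+1) ≤ 2 * γ (2*n+2) ∧ |γ (2*n+2) - γ (2*n+1)| ≤ 1 ∧
      |γ (2*n+2) - γ (2*n)| ≤ 2 := by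
    filter_upwards [hxbig, hδ1, hε1] with n hx hδ hε
    have hxy : γ (2*n+1) ≤ 2 * γ (2*n+2) := by
      have := (abs_le.mp hδ).1; linarith
    have hs : |γ (2*n+2) - γ (2*n)| ≤ 2 := by
      have h := abs_add_le (γ (2*n+2) - γ (2*n+1)) (γ (2*n+1) - γ (2*n))
      have e : γ (2*n+2) - γ (2*n) =
          (γ (2*n+2) - γ (2*n+1)) + (γ (2*n+1) - γ (2*n)) := by ring
      rw [e]; linarith
    exact ⟨hx, hxy, hδ, hs⟩
  refine ⟨⟨ω^2/2 + 1, by positivity, ?_⟩, ⟨2*ω, by linarith, ?_⟩,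
    ⟨ω^2/2 + 1, by positivity, ?_⟩, ⟨2*ω, by linarith, ?_⟩⟩
  · -- Re(a)
    filter_upwards [hfacts] with n ⟨hx, hxy, hδ, hs⟩
    have hx0 : γ (2*n+1) ≠ 0 := (hpos _).ne'
    have hy0 : γ (2*n+2) ≠ 0 := (hpos _).ne'
    have key : (aSeq γ ω n).re -
        (1 - ω ^ 2 / (2 * γ (2 * n + 1) ^ 2) -
          ((γ (2 * n + 2) - γ (2 * n + 1)) + (γ (2 * n + 1) - γ (2 * n))) /
            (2 * γ (2 * n + 1))) =
        ω^2*(γ (2*n+2) - γ (2*n+1))/(2*(γ (2*n+1))^2*(γ (2*n+2)))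
          + (γ (2*n+2) - γ (2*n+1))^2/(2*(γ (2*n+1))*(γ (2*n+2))) := by
      simp only [aSeq, Complex.add_re, Complex.ofReal_re, Complex.mul_re, Complex.I_re,
        Complex.I_im, Complex.ofReal_im]
      field_simp
      ring
    rw [key]
    exact bnd1 ω _ _ _ hx hxy hδ
  · -- Im(a)
    filter_upwards [hfacts] with n ⟨hx, hxy, hδ, hs⟩
    have hx0 : γ (2*n+1) ≠ 0 := (hpos _).ne'
    have hy0 : γ (2*n+2) ≠ 0 := (hpos _).ne'
    have key : (aSeq γ ω n).im -
        (ω / γ (2 * n + 1)) *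
          (1 - ((γ (2 * n + 2) - γ (2 * n + 1)) + (γ (2 * n + 1) - γ (2 * n))) /
            (2 * γ (2 * n + 1))) =
        ω*(γ (2*n+2) - γ (2*n+1))*(γ (2*n+2) - γ (2*n))/(2*(γ (2*n+1))^2*(γ (2*n+2))) := by
      simp only [aSeq, Complex.add_im, Complex.ofReal_im, Complex.mul_im, Complex.I_re,
        Complex.I_im, Complex.ofReal_re]
      field_simp
      ring
    rw [key]
    exact bnd2 ω _ _ _ _ hω.le hx hxy hs
  · -- Re(b)
    filter_upwards [hfacts] with n ⟨hx, hxy, hδ, hs⟩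
    have hx0 : γ (2*n+1) ≠ 0 := (hpos _).ne'
    have hy0 : γ (2*n+2) ≠ 0 := (hpos _).ne'
    have key : (bSeq γ ω n).re -
        (ω ^ 2 / (2 * γ (2 * n + 1) ^ 2) +
          ((γ (2 * n + 2) - γ (2 * n + 1)) - (γ (2 * n + 1) - γ (2 * n))) /
            (2 * γ (2 * n + 1))) =
        -(ω^2*(γ (2*n+2) - γ (2*n+1))/(2*(γ (2*n+1))^2*(γ (2*n+2)))
          + (γ (2*n+2) - γ (2*n+1))^2/(2*(γ (2*n+1))*(γ (2*n+2)))) := by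
      simp only [bSeq, Complex.add_re, Complex.ofReal_re, Complex.mul_re, Complex.I_re,
        Complex.I_im, Complex.ofReal_im]
      field_simp
      ring
    rw [key, abs_neg]
    exact bnd1 ω _ _ _ hx hxy hδ
  · -- Im(b)
    filter_upwards [hfacts] with n ⟨hx, hxy, hδ, hs⟩
    have hx0 : γ (2*n+1) ≠ 0 := (hpos _).ne'
    have hy0 : γ (2*n+2) ≠ 0 := (hpos _).ne'
    have key : (bSeq γ ω n).im -
        (-(ω * ((γ (2 * n + 2) - γ (2 * n + 1)) + (γ (2 * n + 1) - γ (2 * n)))) /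
          (2 * γ (2 * n + 1) ^ 2)) =
        ω*(γ (2*n+2) - γ (2*n+1))*(γ (2*n+2) - γ (2*n))/(2*(γ (2*n+1))^2*(γ (2*n+2))) := by
      simp only [bSeq, Complex.add_im, Complex.ofReal_im, Complex.mul_im, Complex.I_re,
        Complex.I_im, Complex.ofReal_re]
      field_simp
      ring
    rw [key]
    exact bnd2 ω _ _ _ _ hω.le hx hxy hs
end

section
/- Fix ω > 0 and assume the positive sequence (γ_n) satisfies γ_n → ∞ and Δγ_n → 0. For n ≥ 2 set η_n = |Δγ_{2n−4}| + |Δγ_{2n−3}| + |Δγ_{2n−2}| + |Δγ_{2n−1}| and λ_{n−1} = (1/γ_{2n−4} + 1/γ_{2n−3})/(1/γ_{2n−2} + 1/γ_{2n−1}). Then the following asymptotic equalities hold: ln(|a_{n−1}|² − |b_{n−1}|²) = −(Δγ_{2n−4} + Δγ_{2n−3})/γ_{2n−1} + O(η_n/γ_{2n−1}²), and ln(λ_{n−1}) = (Δγ_{2n−4} + 2Δγ_{2n−3} + Δγ_{2n−2})/(2γ_{2n−1}) + O(η_n/γ_{2n−1}²). (In particular |a_{n−1}|² − |b_{n−1}|²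 = γ_{2n−4}/γ_{2n−2} > 0, so the real logarithm is defined.) -/
open Filter

lemma fracBound {p c D q : ℝ} (hp : |p| ≤ c) (hq : D ≤ q) (hD : 0 < D) : |p| / q ≤ c / D :=
  div_le_div₀ (le_trans (abs_nonneg _) hp) hp hD hq
lemma logApprox {a b : ℝ} (ha : 0 < a) (h : |a - b| ≤ a / 2) :
    |Real.log b - Real.log a + (a - b) / a| ≤ 2 * ((a - b) / a) ^ 2 := by
  set x := (a - b) / a with hx
  have hb : b = a * (1 - x) := by rw [hx]; field_simp; ring
  have hxabs : |x| ≤ 1 / 2 := by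
    rw [hx, abs_div, abs_of_pos ha, div_le_iff₀ ha]
    linarith
  have hx1 : |x| < 1 := lt_of_le_of_lt hxabs (by norm_num)
  have h1mx : 0 < 1 - x := by
    have := abs_le.1 hxabs; linarith [this.2]
  have hlog : Real.log b = Real.log a + Real.log (1 - x) := by
    rw [hb, Real.log_mul ha.ne' h1mx.ne']
  have key := Real.abs_log_sub_add_sum_range_le hx1 1
  simp [Finset.sum_range_one] at key
  have heq : Real.log b - Real.log a + x = x + Real.log (1 - x) := by
    rw [hlog]; ring
  rw [heq]
  refine key.trans ?_
  have h1 : 1 / 2 ≤ 1 - |x| := by linarith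
  calc x ^ 2 / (1 - |x|) ≤ x ^ 2 / (1 / 2) :=
      div_le_div_of_nonneg_left (by positivity) (by norm_num) h1
    _ = 2 * x ^ 2 := by ring

lemma absSq (x y : ℝ) : ‖((x : ℂ) + Complex.I * (y : ℝ))‖ ^ 2 = x ^ 2 + y ^ 2 := by
  rw [mul_comm, Complex.sq_norm, Complex.normSq_add_mul_I]

lemma abs_add_six (x1 x2 x3 x4 x5 x6 : ℝ) :
    |x1 + x2 + x3 + x4 + x5 + x6| ≤ |x1| + |x2| + |x3| + |x4| + |x5| + |x6| := by
  calc |x1 + x2 + x3 + x4 + x5 + x6| ≤ |x1 + x2 + x3 + x4 + x5| + |x6| := abs_add_le _ _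
    _ ≤ |x1 + x2 + x3 + x4| + |x5| + |x6| := by linarith [abs_add_le (x1 + x2 + x3 + x4) x5]
    _ ≤ |x1 + x2 + x3| + |x4| + |x5| + |x6| := by linarith [abs_add_le (x1 + x2 + x3) x4]
    _ ≤ |x1 + x2| + |x3| + |x4| + |x5| + |x6| := by linarith [abs_add_le (x1 + x2) x3]
    _ ≤ |x1| + |x2| + |x3| + |x4| + |x5| + |x6| := by linarith [abs_add_le x1 x2]

lemma key2 {g0 g1 g2 g3 : ℝ} (h3 : 16 ≤ g3) (e0 : |g1 - g0| ≤ 1)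
    (e1 : |g2 - g1| ≤ 1) (e2 : |g3 - g2| ≤ 1) :
    |Real.log (g0 / g2) - -((g1 - g0) + (g2 - g1)) / g3| ≤
      20 * ((|g1 - g0| + |g2 - g1| + |g3 - g2|) / g3 ^ 2) := by
  set η := |g1 - g0| + |g2 - g1| + |g3 - g2| with hη
  have hg3 : (0:ℝ) < g3 := by linarith
  have he2 := abs_le.1 e2
  have he1 := abs_le.1 e1
  have he0 := abs_le.1 e0
  have hg2 : 15 ≤ g2 := by linarith
  have hg0 : 13 ≤ g0 := by linarith
  have hg2pos : (0:ℝ) < g2 := by linarith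
  have hg0pos : (0:ℝ) < g0 := by linarith
  have hg2half : g3 / 2 ≤ g2 := by linarith
  -- |g2 - g0| bounds
  have hd : |g2 - g0| ≤ |g2 - g1| + |g1 - g0| := abs_sub_le g2 g1 g0
  have hdη : |g2 - g0| ≤ η := by
    have := abs_nonneg (g3 - g2); rw [hη]; linarith
  have hd2 : |g2 - g0| ≤ 2 := by linarith
  have hηnn : 0 ≤ η := by positivity
  -- log split
  rw [Real.log_div hg0pos.ne' hg2pos.ne']
  -- apply logApprox with a = g2, b = g0
  have hla := logApprox hg2pos (by linarith : |g2 - g0| ≤ g2 / 2)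
  -- identity
  have hid : Real.log g0 - Real.log g2 - -((g1 - g0) + (g2 - g1)) / g3 =
      (Real.log g0 - Real.log g2 + (g2 - g0) / g2) + (g2 - g0) * (g2 - g3) / (g2 * g3) := by
    field_simp
    ring
  rw [hid]
  have hE1 : 2 * ((g2 - g0) / g2) ^ 2 ≤ 16 * (η / g3 ^ 2) := by
    have hsq : (g2 - g0) ^ 2 ≤ 2 * η := by
      nlinarith [sq_abs (g2 - g0), abs_nonneg (g2 - g0)]
    have hden : g3 ^ 2 / 4 ≤ g2 ^ 2 := by nlinarith
    have : ((g2 - g0) / g2) ^ 2 = (g2 - g0) ^ 2 / g2 ^ 2 := by rw [div_pow]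
    rw [this]
    have h1 : (g2 - g0) ^ 2 / g2 ^ 2 ≤ (2 * η) / (g3 ^ 2 / 4) :=
      div_le_div₀ (by positivity) hsq (by positivity) hden
    have h2 : (2 * η) / (g3 ^ 2 / 4) = 8 * (η / g3 ^ 2) := by
      field_simp; ring
    rw [h2] at h1
    linarith
  have hE2 : |(g2 - g0) * (g2 - g3) / (g2 * g3)| ≤ 2 * (η / g3 ^ 2) := by
    rw [abs_div, abs_mul, abs_of_pos (by positivity : (0:ℝ) < g2 * g3)]
    have hnum : |g2 - g0| * |g2 - g3| ≤ η * 1 := by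
      have : |g2 - g3| ≤ 1 := by rw [abs_sub_comm]; exact e2
      exact mul_le_mul hdη this (abs_nonneg _) hηnn
    have hden : g3 ^ 2 / 2 ≤ g2 * g3 := by nlinarith
    have h1 : |g2 - g0| * |g2 - g3| / (g2 * g3) ≤ (η * 1) / (g3 ^ 2 / 2) :=
      div_le_div₀ (by positivity) hnum (by positivity) hden
    have h2 : (η * 1) / (g3 ^ 2 / 2) = 2 * (η / g3 ^ 2) := by field_simp
    rw [h2] at h1
    linarith
  calc |(Real.log g0 - Real.log g2 + (g2 - g0) / g2) + (g2 - g0) * (g2 - g3) / (g2 * g3)|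
      ≤ |Real.log g0 - Real.log g2 + (g2 - g0) / g2| + |(g2 - g0) * (g2 - g3) / (g2 * g3)| :=
        abs_add_le _ _
    _ ≤ 2 * ((g2 - g0) / g2) ^ 2 + 2 * (η / g3 ^ 2) := add_le_add hla hE2
    _ ≤ 16 * (η / g3 ^ 2) + 2 * (η / g3 ^ 2) := by linarith
    _ ≤ 20 * ((|g1 - g0| + |g2 - g1| + |g3 - g2|) / g3 ^ 2) := by
        rw [← hη]; have : 0 ≤ η / g3 ^ 2 := by positivity
        linarith
set_option maxHeartbeats 1000000 in
lemma key3 {g0 g1 g2 g3 : ℝ} (h3 : 16 ≤ g3) (e0 : |g1 - g0| ≤ 1)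
    (e1 : |g2 - g1| ≤ 1) (e2 : |g3 - g2| ≤ 1) :
    |Real.log ((1 / g0 + 1 / g1) / (1 / g2 + 1 / g3)) -
        ((g1 - g0) + 2 * (g2 - g1) + (g3 - g2)) / (2 * g3)| ≤
      64 * ((|g1 - g0| + |g2 - g1| + |g3 - g2|) / g3 ^ 2) := by
  set η := |g1 - g0| + |g2 - g1| + |g3 - g2| with hη
  have hg3 : (0:ℝ) < g3 := by linarith
  have he2 := abs_le.1 e2
  have he1 := abs_le.1 e1
  have he0 := abs_le.1 e0
  have hg2 : 15 ≤ g2 := by linarith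
  have hg1 : 14 ≤ g1 := by linarith
  have hg0 : 13 ≤ g0 := by linarith
  have hg2pos : (0:ℝ) < g2 := by linarith
  have hg1pos : (0:ℝ) < g1 := by linarith
  have hg0pos : (0:ℝ) < g0 := by linarith
  have hηnn : 0 ≤ η := by positivity
  set s := g0 + g1 with hs
  set t := g2 + g3 with ht
  have hspos : (0:ℝ) < s := by simp only [hs]; linarith
  have htpos : (0:ℝ) < t := by simp only [ht]; linarith
  have hts : t - s = (g1 - g0) + 2 * (g2 - g1) + (g3 - g2) := by simp only [hs, ht]; ring
  have htsη : |t - s| ≤ 2 * η := by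
    rw [hts, hη]
    calc |(g1 - g0) + 2 * (g2 - g1) + (g3 - g2)| ≤ |(g1 - g0) + 2 * (g2 - g1)| + |g3 - g2| :=
          abs_add_le _ _
      _ ≤ |g1 - g0| + |2 * (g2 - g1)| + |g3 - g2| := by linarith [abs_add_le (g1 - g0) (2 * (g2 - g1))]
      _ = |g1 - g0| + 2 * |g2 - g1| + |g3 - g2| := by rw [abs_mul, abs_two]
      _ ≤ 2 * (|g1 - g0| + |g2 - g1| + |g3 - g2|) := by
          linarith [abs_nonneg (g1 - g0), abs_nonneg (g3 - g2)]
  have hts4 : |t - s| ≤ 4 := by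
    rw [hts]
    calc |(g1 - g0) + 2 * (g2 - g1) + (g3 - g2)| ≤ |(g1 - g0) + 2 * (g2 - g1)| + |g3 - g2| :=
          abs_add_le _ _
      _ ≤ |g1 - g0| + |2 * (g2 - g1)| + |g3 - g2| := by linarith [abs_add_le (g1 - g0) (2 * (g2 - g1))]
      _ = |g1 - g0| + 2 * |g2 - g1| + |g3 - g2| := by rw [abs_mul, abs_two]
      _ ≤ 4 := by linarith
  -- differences
  have hd20 : |g2 - g0| ≤ η := by
    rw [hη]; linarith [abs_sub_le g2 g1 g0, abs_nonneg (g3 - g2)]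
  have hd20' : |g2 - g0| ≤ 2 := by linarith [abs_sub_le g2 g1 g0]
  have hd31 : |g3 - g1| ≤ η := by
    rw [hη]; linarith [abs_sub_le g3 g2 g1, abs_nonneg (g1 - g0)]
  have hd31' : |g3 - g1| ≤ 2 := by linarith [abs_sub_le g3 g2 g1]
  have hd30 : |g3 - g0| ≤ 3 := by
    calc |g3 - g0| ≤ |g3 - g1| + |g1 - g0| := abs_sub_le g3 g1 g0
      _ ≤ 3 := by linarith
  -- rewrite the log
  have hfrac : (1 / g0 + 1 / g1) / (1 / g2 + 1 / g3) = s * (g2 * g3) / (g0 * g1 * t) := by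
    simp only [hs, ht]; field_simp; ring
  rw [hfrac, Real.log_div (by positivity) (by positivity), Real.log_mul hspos.ne'
    (by positivity), Real.log_mul hg2pos.ne' hg3.ne']
  rw [Real.log_mul (by positivity : (g0 * g1 : ℝ) ≠ 0) htpos.ne',
    Real.log_mul hg0pos.ne' hg1pos.ne']
  have hid : Real.log s + (Real.log g2 + Real.log g3) - (Real.log g0 + Real.log g1 + Real.log t) -
      ((g1 - g0) + 2 * (g2 - g1) + (g3 - g2)) / (2 * g3) =
      (Real.log s - Real.log t + (t - s) / t) +
      (Real.log g2 - Real.log g0 + (g0 - g2) / g0) +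
      (Real.log g3 - Real.log g1 + (g1 - g3) / g1) +
      (t - s) * (g2 - g3) / (2 * g3 * t) +
      (g2 - g0) * (g3 - g0) / (g0 * g3) +
      (g3 - g1) * (g3 - g1) / (g1 * g3) := by
    simp only [hs, ht]
    field_simp
    ring
  rw [hid]
  -- log approximation bounds
  have hA1 := logApprox htpos (show |t - s| ≤ t / 2 by simp only [ht] at hts4 ⊢; linarith)
  have hA2 := logApprox hg0pos (show |g0 - g2| ≤ g0 / 2 by rw [abs_sub_comm]; linarith)
  have hA3 := logApprox hg1pos (show |g1 - g3| ≤ g1 / 2 by rw [abs_sub_comm]; linarith)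
  -- numeric bounds for each piece
  have ht31 : 31 ≤ t := by simp only [ht]; linarith
  have hB1 : 2 * ((t - s) / t) ^ 2 ≤ 16 * (η / g3 ^ 2) := by
    have hsq : (t - s) ^ 2 ≤ 8 * η := by
      calc (t - s) ^ 2 = |t - s| * |t - s| := by rw [abs_mul_abs_self]; ring
        _ ≤ 4 * (2 * η) := mul_le_mul hts4 htsη (abs_nonneg _) (by norm_num)
        _ = 8 * η := by ring
    have hgt : g3 ≤ t := by simp only [ht]; linarith
    have hden : g3 ^ 2 ≤ t ^ 2 := pow_le_pow_left₀ hg3.le hgt 2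
    have h1 : (t - s) ^ 2 / t ^ 2 ≤ (8 * η) / g3 ^ 2 :=
      div_le_div₀ (by positivity) hsq (by positivity) hden
    have h2 : 8 * η / g3 ^ 2 = 8 * (η / g3 ^ 2) := by ring
    rw [div_pow]
    rw [h2] at h1
    linarith
  have hB2 : 2 * ((g0 - g2) / g0) ^ 2 ≤ 16 * (η / g3 ^ 2) := by
    have hsq : (g0 - g2) ^ 2 ≤ 2 * η := by
      calc (g0 - g2) ^ 2 = |g2 - g0| * |g2 - g0| := by rw [abs_mul_abs_self]; ring
        _ ≤ 2 * η := mul_le_mul hd20' hd20 (abs_nonneg _) (by norm_num)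
    have hh : g3 / 2 ≤ g0 := by linarith
    have hden : g3 ^ 2 / 4 ≤ g0 ^ 2 := by
      calc g3 ^ 2 / 4 = (g3 / 2) ^ 2 := by ring
        _ ≤ g0 ^ 2 := pow_le_pow_left₀ (by positivity) hh 2
    have h1 : (g0 - g2) ^ 2 / g0 ^ 2 ≤ (2 * η) / (g3 ^ 2 / 4) :=
      div_le_div₀ (by positivity) hsq (by positivity) hden
    have h2 : (2 * η) / (g3 ^ 2 / 4) = 8 * (η / g3 ^ 2) := by field_simp; ring
    rw [div_pow]
    rw [h2] at h1
    linarith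
  have hB3 : 2 * ((g1 - g3) / g1) ^ 2 ≤ 16 * (η / g3 ^ 2) := by
    have hsq : (g1 - g3) ^ 2 ≤ 2 * η := by
      calc (g1 - g3) ^ 2 = |g3 - g1| * |g3 - g1| := by rw [abs_mul_abs_self]; ring
        _ ≤ 2 * η := mul_le_mul hd31' hd31 (abs_nonneg _) (by norm_num)
    have hh : g3 / 2 ≤ g1 := by linarith
    have hden : g3 ^ 2 / 4 ≤ g1 ^ 2 := by
      calc g3 ^ 2 / 4 = (g3 / 2) ^ 2 := by ring
        _ ≤ g1 ^ 2 := pow_le_pow_left₀ (by positivity) hh 2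
    have h1 : (g1 - g3) ^ 2 / g1 ^ 2 ≤ (2 * η) / (g3 ^ 2 / 4) :=
      div_le_div₀ (by positivity) hsq (by positivity) hden
    have h2 : (2 * η) / (g3 ^ 2 / 4) = 8 * (η / g3 ^ 2) := by field_simp; ring
    rw [div_pow]
    rw [h2] at h1
    linarith
  have hR1 : |(t - s) * (g2 - g3) / (2 * g3 * t)| ≤ η / g3 ^ 2 := by
    rw [abs_div, abs_mul, abs_of_pos (by positivity : (0:ℝ) < 2 * g3 * t)]
    have hnum : |t - s| * |g2 - g3| ≤ (2 * η) * 1 :=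
      mul_le_mul htsη (by rw [abs_sub_comm]; exact e2) (abs_nonneg _) (by positivity)
    have hgt : g3 ≤ t := by simp only [ht]; linarith
    have hden : 2 * g3 ^ 2 ≤ 2 * g3 * t := by
      calc 2 * g3 ^ 2 = 2 * g3 * g3 := by ring
        _ ≤ 2 * g3 * t := mul_le_mul_of_nonneg_left hgt (by positivity)
    have h1 : |t - s| * |g2 - g3| / (2 * g3 * t) ≤ ((2 * η) * 1) / (2 * g3 ^ 2) :=
      div_le_div₀ (by positivity) hnum (by positivity) hden
    have h2 : ((2 * η) * 1) / (2 * g3 ^ 2) = η / g3 ^ 2 := by field_simp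
    rw [h2] at h1
    linarith
  have hR2 : |(g2 - g0) * (g3 - g0) / (g0 * g3)| ≤ 6 * (η / g3 ^ 2) := by
    rw [abs_div, abs_mul, abs_of_pos (by positivity : (0:ℝ) < g0 * g3)]
    have hnum : |g2 - g0| * |g3 - g0| ≤ η * 3 :=
      mul_le_mul hd20 hd30 (abs_nonneg _) hηnn
    have hh : g3 / 2 ≤ g0 := by linarith
    have hden : g3 ^ 2 / 2 ≤ g0 * g3 := by
      calc g3 ^ 2 / 2 = (g3 / 2) * g3 := by ring
        _ ≤ g0 * g3 := mul_le_mul_of_nonneg_right hh hg3.le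
    have h1 : |g2 - g0| * |g3 - g0| / (g0 * g3) ≤ (η * 3) / (g3 ^ 2 / 2) :=
      div_le_div₀ (by positivity) hnum (by positivity) hden
    have h2 : (η * 3) / (g3 ^ 2 / 2) = 6 * (η / g3 ^ 2) := by field_simp; ring
    rw [h2] at h1
    linarith
  have hR3 : |(g3 - g1) * (g3 - g1) / (g1 * g3)| ≤ 4 * (η / g3 ^ 2) := by
    rw [abs_div, abs_mul, abs_of_pos (by positivity : (0:ℝ) < g1 * g3)]
    have hnum : |g3 - g1| * |g3 - g1| ≤ η * 2 :=
      mul_le_mul hd31 hd31' (abs_nonneg _) hηnn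
    have hh : g3 / 2 ≤ g1 := by linarith
    have hden : g3 ^ 2 / 2 ≤ g1 * g3 := by
      calc g3 ^ 2 / 2 = (g3 / 2) * g3 := by ring
        _ ≤ g1 * g3 := mul_le_mul_of_nonneg_right hh hg3.le
    have h1 : |g3 - g1| * |g3 - g1| / (g1 * g3) ≤ (η * 2) / (g3 ^ 2 / 2) :=
      div_le_div₀ (by positivity) hnum (by positivity) hden
    have h2 : (η * 2) / (g3 ^ 2 / 2) = 4 * (η / g3 ^ 2) := by field_simp; ring
    rw [h2] at h1
    linarith
  refine le_trans (abs_add_six _ _ _ _ _ _) ?_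
  have hfinal : 0 ≤ η / g3 ^ 2 := div_nonneg hηnn (sq_nonneg g3)
  linarith [hA1, hA2, hA3, hR1, hR2, hR3, hB1, hB2, hB3]

lemma part1 (γ : ℕ → ℝ) (hpos : ∀ n, 0 < γ n) (ω : ℝ) (m : ℕ) :
    ‖aSeq γ ω m‖ ^ 2 - ‖bSeq γ ω m‖ ^ 2 =
      γ (2 * m) / γ (2 * m + 2) := by
  have h1 : γ (2 * m + 1) ≠ 0 := (hpos _).ne'
  have h2 : γ (2 * m + 2) ≠ 0 := (hpos _).ne'
  rw [aSeq, bSeq, absSq, absSq]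
  field_simp
  ring

/-- Lemma 11 (the two logarithms): stated with the index shift `n ↦ m + 2`
(so `γ_{2n-4} = γ (2m)`, `γ_{2n-3} = γ (2m+1)`, `γ_{2n-2} = γ (2m+2)`,
`γ_{2n-1} = γ (2m+3)`, `a_{n-1} = aSeq γ ω m`, `b_{n-1} = bSeq γ ω m`,
`η_n = |Δγ (2m)| + |Δγ (2m+1)| + |Δγ (2m+2)| + |Δγ (2m+3)|` and
`λ_{n-1} = (1/γ (2m) + 1/γ (2m+1)) / (1/γ (2m+2) + 1/γ (2m+3))`).
In particular `|a_{n-1}|² − |b_{n-1}|² = γ_{2n-4}/γ_{2n-2} > 0`. -/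
theorem stmt_10 (γ : ℕ → ℝ) (hpos : ∀ n, 0 < γ n) (ω : ℝ) (hω : 0 < ω)
    (hC1 : Tendsto γ atTop atTop)
    (hC2 : Tendsto (fun n => γ (n + 1) - γ n) atTop (nhds 0)) :
    -- the parenthetical identity
    (∀ m : ℕ,
      ‖aSeq γ ω m‖ ^ 2 - ‖bSeq γ ω m‖ ^ 2 =
        γ (2 * m) / γ (2 * m + 2)) ∧
    -- ln(|a_{n-1}|² − |b_{n-1}|²)
    (∃ M : ℝ, 0 < M ∧ ∀ᶠ m : ℕ in atTop,
      |Real.log (‖aSeq γ ω m‖ ^ 2 - ‖bSeq γ ω m‖ ^ 2) -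
          (-((γ (2 * m + 1) - γ (2 * m)) + (γ (2 * m + 2) - γ (2 * m + 1))) /
            γ (2 * m + 3))| ≤
        M * ((|γ (2 * m + 1) - γ (2 * m)| + |γ (2 * m + 2) - γ (2 * m + 1)| +
              |γ (2 * m + 3) - γ (2 * m + 2)| + |γ (2 * m + 4) - γ (2 * m + 3)|) /
            γ (2 * m + 3) ^ 2)) ∧
    -- ln(λ_{n-1})
    (∃ M : ℝ, 0 < M ∧ ∀ᶠ m : ℕ in atTop,
      |Real.log ((1 / γ (2 * m) + 1 / γ (2 * m + 1)) /
            (1 / γ (2 * m + 2) + 1 / γ (2 * m + 3))) -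
          ((γ (2 * m + 1) - γ (2 * m)) + 2 * (γ (2 * m + 2) - γ (2 * m + 1)) +
              (γ (2 * m + 3) - γ (2 * m + 2))) /
            (2 * γ (2 * m + 3))| ≤
        M * ((|γ (2 * m + 1) - γ (2 * m)| + |γ (2 * m + 2) - γ (2 * m + 1)| +
              |γ (2 * m + 3) - γ (2 * m + 2)| + |γ (2 * m + 4) - γ (2 * m + 3)|) /
            γ (2 * m + 3) ^ 2)) := by
  
  have hpart1 := part1 γ hpos ω
  have hA : ∀ᶠ n in atTop, 16 ≤ γ n := hC1.eventually_ge_atTop 16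
  have hB : ∀ᶠ n in atTop, |γ (n + 1) - γ n| ≤ 1 := by
    have h := hC2.eventually (Metric.ball_mem_nhds (0 : ℝ) one_pos)
    filter_upwards [h] with n hn
    rw [Real.dist_eq, sub_zero] at hn
    exact hn.le
  obtain ⟨N1, hN1⟩ := eventually_atTop.1 hA
  obtain ⟨N2, hN2⟩ := eventually_atTop.1 hB
  refine ⟨hpart1, ⟨20, by norm_num, ?_⟩, ⟨64, by norm_num, ?_⟩⟩ <;>
    rw [eventually_atTop] <;> refine ⟨N1 + N2, fun m hm => ?_⟩ <;>
  · have h3 := hN1 (2 * m + 3) (by omega)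
    have e0 := hN2 (2 * m) (by omega)
    have e1 := hN2 (2 * m + 1) (by omega)
    have e2 := hN2 (2 * m + 2) (by omega)
    rw [show 2 * m + 1 + 1 = 2 * m + 2 by omega] at e1
    rw [show 2 * m + 2 + 1 = 2 * m + 3 by omega] at e2
    have hsq : (0 : ℝ) < γ (2 * m + 3) ^ 2 := pow_pos (hpos _) 2
    have hmono : (|γ (2 * m + 1) - γ (2 * m)| + |γ (2 * m + 2) - γ (2 * m + 1)| +
        |γ (2 * m + 3) - γ (2 * m + 2)|) / γ (2 * m + 3) ^ 2 ≤
        (|γ (2 * m + 1) - γ (2 * m)| + |γ (2 * m + 2) - γ (2 * m + 1)| +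
        |γ (2 * m + 3) - γ (2 * m + 2)| + |γ (2 * m + 4) - γ (2 * m + 3)|) /
          γ (2 * m + 3) ^ 2 :=
      (div_le_div_iff_of_pos_right hsq).2 (by linarith [abs_nonneg (γ (2 * m + 4) - γ (2 * m + 3))])
    first
      | (rw [hpart1 m]; refine (key2 h3 e0 e1 e2).trans ?_; linarith [hmono])
      | (refine (key3 h3 e0 e1 e2).trans ?_; linarith [hmono])
end
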